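/- arXiv:1607.03942 — 10 statements merged into one kernel-verified Lean document; each statement's English description precedes it below -/
import Mathlib

section
/- Let F be an infinite field of characteristic different from 2, let A = M_n(F) carry a grading by a group G, and let a grading of A by a group H be a coarsening of the G-grading (for every g ∈ G there exists h ∈ H with A_g ⊆ A_h). If A has the primeness property for G-graded central polynomials then A has the primeness property for H-graded central polynomials. -/
section GradedDefs

variable {F : Type*} [Field F] {G : Type*} [Group G] {A : Type*} [Ring A] [Algebra F A]

/-- An internal algebra grading of `A` by the group `G`: the components are independent,
span `A`, and multiply according to the group operation. -/
structure IsAlgGrading [DecidableEq G] (𝒜 : G → Submodule F A) : Prop where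
  internal : DirectSum.IsInternal 𝒜
  mul_mem : ∀ {g h : G} {x y : A}, x ∈ 𝒜 g → y ∈ 𝒜 h → x * y ∈ 𝒜 (g * h)

/-- An admissible (graded) substitution: the variable `x_{i,g}` is replaced by an element
of the homogeneous component of degree `g`. -/
def GradedSubst (𝒜 : G → Submodule F A) (a : ℕ × G → A) : Prop := ∀ p : ℕ × G, a p ∈ 𝒜 p.2

/-- `f` is a graded polynomial identity. -/
def IsGradedIdentity (𝒜 : G → Submodule F A) (f : FreeAlgebra F (ℕ × G)) : Prop :=
  ∀ a : ℕ × G → A, GradedSubst 𝒜 a → FreeAlgebra.lift F a f = 0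

/-- `f` is a graded central polynomial. -/
def IsGradedCentral (𝒜 : G → Submodule F A) (f : FreeAlgebra F (ℕ × G)) : Prop :=
  ¬ IsGradedIdentity 𝒜 f ∧
    ∀ a : ℕ × G → A, GradedSubst 𝒜 a → FreeAlgebra.lift F a f ∈ Set.center A

/-- `f` only uses (graded) variables from the set `S`. -/
def UsesVars (S : Set (ℕ × G)) (f : FreeAlgebra F (ℕ × G)) : Prop :=
  f ∈ Algebra.adjoin F (FreeAlgebra.ι F '' S)

/-- The primeness property for graded central polynomials: if a product of two polynomials
in disjoint sets of variables is graded central, then both factors are graded central. -/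
def HasGradedPrimeness (𝒜 : G → Submodule F A) : Prop :=
  ∀ (S T : Set (ℕ × G)) (f g : FreeAlgebra F (ℕ × G)),
    Disjoint S T → UsesVars S f → UsesVars T g →
    IsGradedCentral 𝒜 (f * g) →
    IsGradedCentral 𝒜 f ∧ IsGradedCentral 𝒜 g

end GradedDefs

/-- Let `A = Mₙ(F)` (over an infinite field of characteristic `≠ 2`)
carry a grading by a group `G` and let a grading by a group `H` be a coarsening of it.
If `A` has the primeness property for `G`-graded central polynomials, then it has it for
`H`-graded central polynomials. -/
theorem primeness_of_coarsening
    (F : Type*) [Field F] [Infinite F] (hchar : (2 : F) ≠ 0)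
    {G : Type*} [Group G] [DecidableEq G] {H : Type*} [Group H] [DecidableEq H]
    (n : ℕ)
    (𝒜 : G → Submodule F (Matrix (Fin n) (Fin n) F))
    (ℬ : H → Submodule F (Matrix (Fin n) (Fin n) F))
    (hA : IsAlgGrading 𝒜) (hB : IsAlgGrading ℬ)
    (hcoarse : ∀ g : G, ∃ h : H, 𝒜 g ≤ ℬ h)
    (hprime : HasGradedPrimeness 𝒜) :
    HasGradedPrimeness ℬ := by
  classical
  choose c hc using hcoarse
  have hfin : {g : G | 𝒜 g ≠ ⊥}.Finite :=
    Submodule.finite_ne_bot_of_iSupIndep hA.internal.submodule_iSupIndep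
  set Gs : Finset G := hfin.toFinset with hGsdef
  have hGsmem : ∀ g : G, g ∈ Gs ↔ 𝒜 g ≠ ⊥ := fun g => hfin.mem_toFinset
  set v : ℕ × H → FreeAlgebra F (ℕ × G) := fun p =>
    ∑ g ∈ Gs.filter (fun g => c g = p.2), FreeAlgebra.ι F (p.1, g) with hv
  set Φ : FreeAlgebra F (ℕ × H) →ₐ[F] FreeAlgebra F (ℕ × G) := FreeAlgebra.lift F v with hΦ
  set e := LinearEquiv.ofBijective (DirectSum.coeLinearMap 𝒜) hA.internal with he
  -- decomposition lemma
  have hdecomp : ∀ (h : H) (x : Matrix (Fin n) (Fin n) F), x ∈ ℬ h →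
      ∑ g ∈ Gs.filter (fun g => c g = h), ((e.symm x) g : Matrix (Fin n) (Fin n) F) = x := by
    intro h x hx
    have hxe : DirectSum.coeLinearMap 𝒜 (e.symm x) = x := e.apply_symm_apply x
    set d := e.symm x with hd
    have hsum : ∑ g ∈ d.support, ((d g : Matrix (Fin n) (Fin n) F)) = x := by
      calc ∑ g ∈ d.support, ((d g : Matrix (Fin n) (Fin n) F))
          = ∑ g ∈ d.support, DirectSum.coeLinearMap 𝒜 (DirectSum.of _ g (d g)) := by
            refine Finset.sum_congr rfl fun g _ => ?_
            rw [DirectSum.coeLinearMap_of]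
        _ = DirectSum.coeLinearMap 𝒜 (∑ g ∈ d.support, DirectSum.of _ g (d g)) :=
            (map_sum _ _ _).symm
        _ = x := by rw [DirectSum.sum_support_of]; exact hxe
    have hsub : d.support ⊆ Gs := by
      intro g hg
      rw [DFinsupp.mem_support_iff] at hg
      refine (hGsmem g).mpr ((Submodule.ne_bot_iff _).mpr ⟨(d g : Matrix (Fin n) (Fin n) F),
        (d g).2, fun h0 => hg (Submodule.coe_eq_zero.mp h0)⟩)
    have hGsum : ∑ g ∈ Gs, ((d g : Matrix (Fin n) (Fin n) F)) = x :=
      (Finset.sum_subset hsub (fun g _ hg => by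
        rw [DFinsupp.notMem_support_iff] at hg; simp [hg])).symm.trans hsum
    have hsplit := Finset.sum_filter_add_sum_filter_not Gs (fun g => c g = h)
      (fun g => ((d g : Matrix (Fin n) (Fin n) F)))
    set u := ∑ g ∈ Gs.filter (fun g => c g = h), ((d g : Matrix (Fin n) (Fin n) F)) with hu'
    set w := ∑ g ∈ Gs.filter (fun g => ¬ c g = h), ((d g : Matrix (Fin n) (Fin n) F)) with hw'
    have hu : u ∈ ℬ h := Submodule.sum_mem _ fun g hg =>
      (Finset.mem_filter.mp hg).2 ▸ hc g (d g).2
    have hw1 : w ∈ ℬ h := by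
      have hxw : w = x - u := eq_sub_of_add_eq' (hsplit.trans hGsum)
      rw [hxw]; exact Submodule.sub_mem _ hx hu
    have hw2 : w ∈ ⨆ h' ≠ h, ℬ h' := Submodule.sum_mem _ fun g hg => by
      have hne : c g ≠ h := (Finset.mem_filter.mp hg).2
      exact le_iSup₂ (f := fun h' (_ : h' ≠ h) => ℬ h') (c g) hne (hc g (d g).2)
    have hw0 : w = 0 := by
      have hmem : w ∈ ℬ h ⊓ (⨆ h' ≠ h, ℬ h') := Submodule.mem_inf.mpr ⟨hw1, hw2⟩
      have := (hB.internal.submodule_iSupIndep h).le_bot hmem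
      simpa using this
    have : u + w = x := hsplit.trans hGsum
    simpa [hw0] using this
  -- forward substitution
  have hfwd : ∀ a : ℕ × G → Matrix (Fin n) (Fin n) F, GradedSubst 𝒜 a →
      ∃ b, GradedSubst ℬ b ∧ ∀ f, FreeAlgebra.lift F a (Φ f) = FreeAlgebra.lift F b f := by
    intro a ha
    refine ⟨fun p => ∑ g ∈ Gs.filter (fun g => c g = p.2), a (p.1, g), ?_, ?_⟩
    · intro p
      exact Submodule.sum_mem _ fun g hg =>
        (Finset.mem_filter.mp hg).2 ▸ hc g (ha (p.1, g))
    · intro f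
      have heq : (FreeAlgebra.lift F a).comp Φ =
          FreeAlgebra.lift F (fun p => ∑ g ∈ Gs.filter (fun g => c g = p.2), a (p.1, g)) := by
        apply FreeAlgebra.hom_ext
        funext p
        simp [hΦ, hv, map_sum]
      exact DFunLike.congr_fun heq f
  -- backward substitution
  have hbwd : ∀ b : ℕ × H → Matrix (Fin n) (Fin n) F, GradedSubst ℬ b →
      ∃ a, GradedSubst 𝒜 a ∧ ∀ f, FreeAlgebra.lift F a (Φ f) = FreeAlgebra.lift F b f := by
    intro b hb
    refine ⟨fun p => ((e.symm (b (p.1, c p.2))) p.2 : Matrix (Fin n) (Fin n) F),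
      fun p => SetLike.coe_mem _, ?_⟩
    intro f
    have heq : (FreeAlgebra.lift F (fun p : ℕ × G =>
          ((e.symm (b (p.1, c p.2))) p.2 : Matrix (Fin n) (Fin n) F))).comp Φ =
        FreeAlgebra.lift F b := by
      apply FreeAlgebra.hom_ext
      funext p
      have : ∑ g ∈ Gs.filter (fun g => c g = p.2),
          ((e.symm (b (p.1, c g))) g : Matrix (Fin n) (Fin n) F) = b p := by
        rw [Finset.sum_congr rfl (fun g hg => by rw [(Finset.mem_filter.mp hg).2])]
        exact hdecomp p.2 _ (hb p)
      simpa [hΦ, hv, map_sum] using this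
    exact DFunLike.congr_fun heq f
  -- centrality transfer
  have hiff : ∀ f : FreeAlgebra F (ℕ × H), IsGradedCentral ℬ f ↔ IsGradedCentral 𝒜 (Φ f) := by
    intro f
    constructor
    · rintro ⟨hni, hcen⟩
      constructor
      · intro hid
        apply hni
        intro b hb
        obtain ⟨a, ha, hab⟩ := hbwd b hb
        rw [← hab f]; exact hid a ha
      · intro a ha
        obtain ⟨b, hb, hab⟩ := hfwd a ha
        rw [hab f]; exact hcen b hb
    · rintro ⟨hni, hcen⟩
      constructor
      · intro hid
        apply hni
        intro a ha
        obtain ⟨b, hb, hab⟩ := hfwd a ha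
        rw [hab f]; exact hid b hb
      · intro b hb
        obtain ⟨a, ha, hab⟩ := hbwd b hb
        rw [← hab f]; exact hcen a ha
  -- variable transfer
  have hvars : ∀ (S : Set (ℕ × H)) (f : FreeAlgebra F (ℕ × H)), UsesVars S f →
      UsesVars {p : ℕ × G | (p.1, c p.2) ∈ S} (Φ f) := by
    intro S f hf
    have h1 : Φ f ∈ (Algebra.adjoin F (FreeAlgebra.ι F '' S)).map Φ := ⟨f, hf, rfl⟩
    rw [AlgHom.map_adjoin] at h1
    refine Algebra.adjoin_le ?_ h1
    rintro - ⟨-, ⟨p, hpS, rfl⟩, rfl⟩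
    have : Φ (FreeAlgebra.ι F p) = v p := by simp [hΦ]
    rw [this, hv]
    refine Subalgebra.sum_mem _ fun g hg => ?_
    refine Algebra.subset_adjoin ⟨(p.1, g), ?_, rfl⟩
    have hcg : c g = p.2 := (Finset.mem_filter.mp hg).2
    show (p.1, c g) ∈ S
    rw [hcg]
    exact hpS
  -- main argument
  intro S T f g hST hf hg hfg
  have hd : Disjoint {p : ℕ × G | (p.1, c p.2) ∈ S} {p : ℕ × G | (p.1, c p.2) ∈ T} := by
    rw [Set.disjoint_left] at hST ⊢
    intro p hp hq
    exact hST hp hq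
  have hc' := hprime _ _ (Φ f) (Φ g) hd (hvars S f hf) (hvars T g hg)
    (by rw [← map_mul]; exact (hiff (f * g)).mp hfg)
  exact ⟨(hiff f).mpr hc'.1, (hiff g).mpr hc'.2⟩
end

section
/- Let F be an infinite field of characteristic different from 2 and let A = M_n(F) carry an elementary grading by a group G. Let f(x_{1,g_1},…,x_{r,g_r}) and g(x_{r+1,g_{r+1}},…,x_{s,g_s}) be polynomials in disjoint sets of variables such that f·g is a graded central polynomial for A. Then there exists an invertible diagonal matrix P ∈ M_n(F) such that the result of every f-admissible substitution is a scalar multiple of P and the result of every g-admissible substitution is a scalar multiple of P^{-1}. -/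
section Elementary

variable (F : Type*) [Field F] {G : Type*} [Group G] {n : ℕ}

/-- The homogeneous component of degree `x` of the elementary grading of `Mₙ(F)`
induced by the tuple `v`: it is spanned by the matrix units `E i j` with
`(v i)⁻¹ * v j = x`. -/
def elemComp (v : Fin n → G) (x : G) : Submodule F (Matrix (Fin n) (Fin n) F) where
  carrier := {M | ∀ i j, (v i)⁻¹ * v j ≠ x → M i j = 0}
  add_mem' := by
    intro M N hM hN i j h
    simp [Matrix.add_apply, hM i j h, hN i j h]
  zero_mem' := by intro i j _; simp
  smul_mem' := by
    intro c M hM i j h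
    simp [Matrix.smul_apply, hM i j h]

/-- The subgroup of permutations `σ` of `{1,…,n}` for which the automorphism `Λ_σ`
(which sends `E i j` to `E (σ i) (σ j)`) is a graded automorphism. -/
def GradedPerms (v : Fin n → G) : Subgroup (Equiv.Perm (Fin n)) where
  carrier := {σ | ∀ i j, (v (σ i))⁻¹ * v (σ j) = (v i)⁻¹ * v j}
  one_mem' := by intro i j; simp
  mul_mem' := by
    intro σ τ hσ hτ i j
    simpa [Equiv.Perm.mul_apply] using (hσ (τ i) (τ j)).trans (hτ i j)
  inv_mem' := by
    intro σ hσ i j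
    simpa using (hσ (σ⁻¹ i) (σ⁻¹ j)).symm

/-- The automorphism `Λ_σ` of the matrix algebra, determined by
`Λ_σ (E i j) = E (σ i) (σ j)`. -/
def permConj (σ : Equiv.Perm (Fin n)) (M : Matrix (Fin n) (Fin n) F) :
    Matrix (Fin n) (Fin n) F :=
  M.submatrix ⇑σ.symm ⇑σ.symm

end Elementary

/-!
Fix an admissible substitution `b` with `f(b) g(b) = c • 1 ≠ 0` and put `u = f(b)`. As `f` and `g`
use disjoint variables, any admissible `a` can be spliced with `b`, and centrality of `f(a) g(b)`
and of `f(b) g(a)` gives `f(a) ∈ F u` and `g(a) ∈ F u⁻¹`. Conjugation by an invertible diagonal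
matrix `D` preserves the elementary grading, so `D u D⁻¹ ∈ F u`; taking for `D` the diagonal matrix
with a single entry `t ∉ {0, 1, -1}` and all others `1` forces every off-diagonal entry of the
invertible matrix `u` to vanish. Hence `P = u` works.
-/

namespace FreeAlgebra

variable {R X A : Type*} [CommSemiring R] [Semiring A] [Algebra R A]

theorem lift_eq_of_eqOn_of_mem_adjoin {S : Set X} {a b : X → A} (h : S.EqOn a b)
    {f : FreeAlgebra R X} (hf : f ∈ Algebra.adjoin R (ι R '' S)) :
    lift R a f = lift R b f :=
  AlgHom.eqOn_adjoin_iff.mpr (Set.forall_mem_image.mpr fun x hx => by simpa using h hx) hf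

theorem lift_units_conj (U : Aˣ) (a : X → A) (f : FreeAlgebra R X) :
    lift R (fun x => U * a x * ↑U⁻¹) f = U * lift R a f * ↑U⁻¹ := by
  let φ := MulSemiringAction.toAlgHom R A (ConjAct.toConjAct U)
  have hφ : lift R (fun x => U * a x * ↑U⁻¹) = φ.comp (lift R a) :=
    FreeAlgebra.hom_ext (funext fun x => by simp [φ, ConjAct.units_smul_def])
  simp [hφ, φ, ConjAct.units_smul_def]

end FreeAlgebra

section Graded

variable {F G A : Type*} [Field F] [Ring A] [Algebra F A] {𝒜 : G → Submodule F A}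

theorem GradedSubst.piecewise {a b : ℕ × G → A} (ha : GradedSubst 𝒜 a) (hb : GradedSubst 𝒜 b)
    (S : Set (ℕ × G)) [DecidablePred (· ∈ S)] : GradedSubst 𝒜 (S.piecewise a b) := fun p => by
  by_cases hp : p ∈ S
  · simpa [hp] using ha p
  · simpa [hp] using hb p

theorem lift_mul_lift_mem_center_of_disjoint {S T : Set (ℕ × G)} {f g : FreeAlgebra F (ℕ × G)}
    (hST : Disjoint S T) (hf : UsesVars S f) (hg : UsesVars T g)
    (hfg : ∀ s, GradedSubst 𝒜 s → FreeAlgebra.lift F s (f * g) ∈ Set.center A)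
    {a b : ℕ × G → A} (ha : GradedSubst 𝒜 a) (hb : GradedSubst 𝒜 b) :
    FreeAlgebra.lift F a f * FreeAlgebra.lift F b g ∈ Set.center A := by
  classical
  have hfa : FreeAlgebra.lift F (S.piecewise a b) f = FreeAlgebra.lift F a f :=
    FreeAlgebra.lift_eq_of_eqOn_of_mem_adjoin (Set.piecewise_eqOn S a b) hf
  have hgb : FreeAlgebra.lift F (S.piecewise a b) g = FreeAlgebra.lift F b g :=
    FreeAlgebra.lift_eq_of_eqOn_of_mem_adjoin
      ((Set.piecewise_eqOn_compl S a b).mono hST.subset_compl_left) hg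
  simpa [hfa, hgb] using hfg _ (ha.piecewise hb S)

end Graded

namespace Matrix

variable {ι F : Type*} [Fintype ι] [DecidableEq ι] [Field F]

theorem exists_eq_smul_one_of_mem_center {M : Matrix ι ι F}
    (hM : M ∈ Set.center (Matrix ι ι F)) : ∃ c : F, M = c • 1 := by
  obtain ⟨c, rfl⟩ := center_eq_range (n := ι) (R := F) ▸ hM
  exact ⟨c, by simp [smul_one_eq_diagonal]⟩

theorem eq_div_smul_of_mul_eq_smul_one {u w x : Matrix ι ι F} {c r : F} (hc : c ≠ 0)
    (huw : u * w = c • 1) (hxw : x * w = r • 1) : x = (r / c) • u := by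
  have hwu : w * u = c • 1 := by
    have : u * (c⁻¹ • w) = 1 := by simp [huw, hc]
    simpa [hc] using congrArg (c • ·) (mul_eq_one_comm.mp this)
  calc x = c⁻¹ • (x * (w * u)) := by simp [hwu, hc]
    _ = (r / c) • u := by rw [← mul_assoc, hxw]; simp [smul_smul, div_eq_inv_mul]

theorem eq_smul_inv_of_mul_eq_smul_one {u y : Matrix ι ι F} {r : F} (hu : IsUnit u)
    (huy : u * y = r • 1) : y = r • u⁻¹ := by
  calc y = u⁻¹ * (u * y) :=
        (nonsing_inv_mul_cancel_left u y ((isUnit_iff_isUnit_det u).mp hu)).symm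
    _ = r • u⁻¹ := by rw [huy, mul_smul_comm, mul_one]

theorem isDiag_of_forall_diagonal_mul_eq_smul_mul {u : Matrix ι ι F} (hu : IsUnit u) {t : F}
    (ht0 : t ≠ 0) (ht : t ^ 2 ≠ 1)
    (h : ∀ d : ι → F, (∀ i, d i ≠ 0) → ∃ c : F, diagonal d * u = c • (u * diagonal d)) :
    u.IsDiag := by
  intro i j hij
  by_contra huij
  set d : ι → F := Function.update 1 i t with hd
  have hdi : d i = t := Function.update_self ..
  have hdk : ∀ k, k ≠ i → d k = 1 := fun k hk => Function.update_of_ne hk ..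
  obtain ⟨c, hc⟩ := h d fun k => by by_cases hk : k = i <;> simp [hk, hdi, hdk, ht0]
  have hentry : ∀ a b, d a * u a b = c * (u a b * d b) := fun a b => by
    simpa [diagonal_mul, mul_diagonal] using congrFun (congrFun hc a) b
  have hct : c = t := by
    have := hentry i j
    rw [hdi, hdk j hij.symm, mul_one] at this
    exact mul_right_cancel₀ huij this.symm
  have hcol : ∀ a, u a i = 0 := fun a => by
    have hda : d a ≠ t ^ 2 := by
      by_cases ha : a = i
      · rw [ha, hdi]
        intro h2
        have h1 : t = 1 := mul_left_cancel₀ ht0 (by rw [mul_one, ← sq]; exact h2.symm)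
        exact ht (by rw [h1, one_pow])
      · rw [hdk a ha]
        exact ht.symm
    have hzero : (d a - t ^ 2) * u a i = 0 := by rw [sub_mul, hentry a i, hct, hdi]; ring
    exact (mul_eq_zero.mp hzero).resolve_left (sub_ne_zero.mpr hda)
  exact (isUnit_iff_isUnit_det u).mp hu |>.ne_zero (det_eq_zero_of_column_eq_zero i hcol)

end Matrix

theorem exists_ne_zero_sq_ne_one (F : Type*) [Field F] [Infinite F] :
    ∃ t : F, t ≠ 0 ∧ t ^ 2 ≠ 1 := by
  classical
  obtain ⟨t, ht⟩ := Infinite.exists_notMem_finset ({0, 1, -1} : Finset F)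
  simp only [Finset.mem_insert, Finset.mem_singleton, not_or] at ht
  exact ⟨t, ht.1, by rw [sq, Ne, mul_self_eq_one_iff]; tauto⟩

section Elementary

variable {F G : Type*} [Field F] [Group G] {n : ℕ} {v : Fin n → G}

open Matrix

theorem diagonal_mul_mul_diagonal_mem_elemComp {x : G} {M : Matrix (Fin n) (Fin n) F}
    (hM : M ∈ elemComp F v x) (d e : Fin n → F) :
    diagonal d * M * diagonal e ∈ elemComp F v x := fun i j hij => by
  simp [mul_diagonal, diagonal_mul, hM i j hij]

theorem exists_diagonal_mul_eq_smul_mul_of_lift_eq_smul {f : FreeAlgebra F (ℕ × G)}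
    {b : ℕ × G → Matrix (Fin n) (Fin n) F} (hb : GradedSubst (elemComp F v) b)
    (hf : ∀ a, GradedSubst (elemComp F v) a →
      ∃ c : F, FreeAlgebra.lift F a f = c • FreeAlgebra.lift F b f)
    (d : Fin n → F) (hd : ∀ i, d i ≠ 0) :
    ∃ c : F, diagonal d * FreeAlgebra.lift F b f = c • (FreeAlgebra.lift F b f * diagonal d) := by
  let U : (Matrix (Fin n) (Fin n) F)ˣ :=
    ⟨diagonal d, diagonal d⁻¹, by simp [hd], by simp [hd]⟩
  obtain ⟨c, hc⟩ := hf (fun p => U * b p * (↑U⁻¹ : Matrix (Fin n) (Fin n) F))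
    fun p => diagonal_mul_mul_diagonal_mem_elemComp (hb p) d d⁻¹
  rw [FreeAlgebra.lift_units_conj] at hc
  refine ⟨c, ?_⟩
  simpa only [mul_assoc, Units.inv_mul, mul_one, smul_mul_assoc] using
    congrArg (· * (U : Matrix (Fin n) (Fin n) F)) hc

end Elementary

theorem scalar_multiple_of_central_product_general
    (F : Type*) [Field F] [Infinite F]
    {G : Type*} [Group G] {n : ℕ} (v : Fin n → G)
    (S T : Set (ℕ × G)) (f g : FreeAlgebra F (ℕ × G))
    (hST : Disjoint S T) (hf : UsesVars S f) (hg : UsesVars T g)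
    (hfg : IsGradedCentral (elemComp F v) (f * g)) :
    ∃ P : Matrix (Fin n) (Fin n) F, IsUnit P ∧ (∀ i j, i ≠ j → P i j = 0) ∧
      (∀ a : ℕ × G → Matrix (Fin n) (Fin n) F, GradedSubst (elemComp F v) a →
        ∃ c : F, FreeAlgebra.lift F a f = c • P) ∧
      (∀ a : ℕ × G → Matrix (Fin n) (Fin n) F, GradedSubst (elemComp F v) a →
        ∃ c : F, FreeAlgebra.lift F a g = c • P⁻¹) := by
  obtain ⟨b, hb, hb0⟩ :
      ∃ b, GradedSubst (elemComp F v) b ∧ FreeAlgebra.lift F b (f * g) ≠ 0 := by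
    simpa [IsGradedIdentity] using hfg.1
  obtain ⟨c, hc⟩ := Matrix.exists_eq_smul_one_of_mem_center (hfg.2 b hb)
  rw [map_mul] at hc hb0
  have hc0 : c ≠ 0 := by rintro rfl; exact hb0 (by rw [hc, zero_smul])
  set u := FreeAlgebra.lift F b f
  have hu : IsUnit u := IsUnit.of_mul_eq_one (c⁻¹ • FreeAlgebra.lift F b g) (by
    rw [mul_smul_comm, hc, smul_smul, inv_mul_cancel₀ hc0, one_smul])
  have hcenter : ∀ {a a'}, GradedSubst (elemComp F v) a → GradedSubst (elemComp F v) a' →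
      FreeAlgebra.lift F a f * FreeAlgebra.lift F a' g ∈ Set.center _ :=
    lift_mul_lift_mem_center_of_disjoint hST hf hg hfg.2
  have hfu : ∀ a, GradedSubst (elemComp F v) a → ∃ r : F, FreeAlgebra.lift F a f = r • u := by
    intro a ha
    obtain ⟨r, hr⟩ := Matrix.exists_eq_smul_one_of_mem_center (hcenter ha hb)
    exact ⟨r / c, Matrix.eq_div_smul_of_mul_eq_smul_one hc0 hc hr⟩
  have hgu : ∀ a, GradedSubst (elemComp F v) a → ∃ r : F, FreeAlgebra.lift F a g = r • u⁻¹ := by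
    intro a ha
    obtain ⟨r, hr⟩ := Matrix.exists_eq_smul_one_of_mem_center (hcenter hb ha)
    exact ⟨r, Matrix.eq_smul_inv_of_mul_eq_smul_one hu hr⟩
  obtain ⟨t, ht0, ht⟩ := exists_ne_zero_sq_ne_one F
  exact ⟨u, hu, Matrix.isDiag_of_forall_diagonal_mul_eq_smul_mul hu ht0 ht
    (exists_diagonal_mul_eq_smul_mul_of_lift_eq_smul hb hfu), hfu, hgu⟩

/-- Let `A = Mₙ(F)` carry an elementary grading by a group `G` and let
`f`, `g` be polynomials in disjoint sets of variables whose product is a graded central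
polynomial for `A`.  Then there is an invertible diagonal matrix `P` such that the
result of every `f`-admissible substitution is a scalar multiple of `P` and the result
of every `g`-admissible substitution is a scalar multiple of `P⁻¹`. -/
theorem scalar_multiple_of_central_product
    (F : Type*) [Field F] [Infinite F] (hchar : (2 : F) ≠ 0)
    {G : Type*} [Group G] {n : ℕ} (v : Fin n → G)
    (S T : Set (ℕ × G)) (f g : FreeAlgebra F (ℕ × G))
    (hST : Disjoint S T) (hf : UsesVars S f) (hg : UsesVars T g)
    (hfg : IsGradedCentral (elemComp F v) (f * g)) :
    ∃ P : Matrix (Fin n) (Fin n) F, IsUnit P ∧ (∀ i j, i ≠ j → P i j = 0) ∧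
      (∀ a : ℕ × G → Matrix (Fin n) (Fin n) F, GradedSubst (elemComp F v) a →
        ∃ c : F, FreeAlgebra.lift F a f = c • P) ∧
      (∀ a : ℕ × G → Matrix (Fin n) (Fin n) F, GradedSubst (elemComp F v) a →
        ∃ c : F, FreeAlgebra.lift F a g = c • P⁻¹) :=
  scalar_multiple_of_central_product_general F v S T f g hST hf hg hfg
end

section
/- Let F be an infinite field of characteristic different from 2 and let A = M_n(F) carry an elementary grading by a group G, with H the group of permutations σ ∈ S_n for which Λ_σ is a graded automorphism. Let P ∈ M_n(F) and let f be a polynomial in F⟨X_G⟩ that is not a graded identity for A and such that the result of every f-admissible substitution is a scalar multiple of P. Then for every σ ∈ H there exists a non-zero scalar λ(σ) ∈ F^× with Λ_σ(P) = λ(σ)^{-1} P, and the map λ: H → F^× is a group homomorphism. -/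
/-! A graded automorphism `Λ` sends admissible substitutions to admissible substitutions and
commutes with evaluating `f`. Evaluating at a substitution on which `f` does not vanish, whose
value is `c • P` with `c ≠ 0`, shows that `Λ P` is again a multiple of `P`. Hence the line `F • P`
is stable under the representation `σ ↦ Λ_σ` of `H`, which acts on it through a character
`χ : H →* Fˣ`; take `λ = χ⁻¹`. -/
theorem FreeAlgebra.lift_comp_apply {R X A B : Type*} [CommSemiring R] [Semiring A]
    [Algebra R A] [Semiring B] [Algebra R B] (φ : A →ₐ[R] B) (a : X → A)
    (f : FreeAlgebra R X) : FreeAlgebra.lift R (φ ∘ a) f = φ (FreeAlgebra.lift R a f) := by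
  have : FreeAlgebra.lift R (φ ∘ a) = φ.comp (FreeAlgebra.lift R a) :=
    FreeAlgebra.hom_ext (by ext; simp)
  rw [this, AlgHom.comp_apply]

theorem Representation.exists_character_of_apply_eq_smul {k H V : Type*} [Field k] [Group H]
    [AddCommGroup V] [Module k V] (ρ : Representation k H V) {P : V} (hP : P ≠ 0)
    (hline : ∀ h, ∃ c : k, ρ h P = c • P) :
    ∃ χ : H →* kˣ, ∀ h, ρ h P = (χ h : k) • P := by
  choose c hc using hline
  have hc_uniq : ∀ h (e : k), ρ h P = e • P → c h = e := fun h e he =>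
    smul_left_injective k hP ((hc h).symm.trans he)
  have hc_ne : ∀ h, c h ≠ 0 := by
    intro h h0
    apply hP
    have : ρ h P = 0 := by rw [hc h, h0, zero_smul]
    simpa [← Module.End.mul_apply, ← map_mul] using congrArg (ρ h⁻¹) this
  refine ⟨{ toFun := fun h => Units.mk0 (c h) (hc_ne h), map_one' := ?_, map_mul' := ?_ }, ?_⟩
  · ext
    exact hc_uniq 1 1 (by simp)
  · intro g h
    ext
    refine hc_uniq _ _ ?_
    rw [map_mul, Module.End.mul_apply, hc h, map_smul, hc g, smul_smul, mul_comm]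
    rfl
  · exact hc

section GradedAutomorphism

variable {F G A : Type*} [Field F] [Ring A] [Algebra F A] {𝒜 : G → Submodule F A}
  {f : FreeAlgebra F (ℕ × G)} {P : A}

theorem exists_gradedSubst_lift_ne_zero (hf : ¬ IsGradedIdentity 𝒜 f) :
    ∃ a, GradedSubst 𝒜 a ∧ FreeAlgebra.lift F a f ≠ 0 := by
  simpa [IsGradedIdentity] using hf

theorem ne_zero_of_forall_lift_eq_smul (hf : ¬ IsGradedIdentity 𝒜 f)
    (hP : ∀ a, GradedSubst 𝒜 a → ∃ c : F, FreeAlgebra.lift F a f = c • P) : P ≠ 0 := by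
  obtain ⟨a, ha, hne⟩ := exists_gradedSubst_lift_ne_zero hf
  obtain ⟨c, hc⟩ := hP a ha
  rintro rfl
  simp [hc] at hne

theorem exists_map_eq_smul_of_forall_lift_eq_smul (Λ : A →ₐ[F] A)
    (hΛ : ∀ g, ∀ x ∈ 𝒜 g, Λ x ∈ 𝒜 g) (hf : ¬ IsGradedIdentity 𝒜 f)
    (hP : ∀ a, GradedSubst 𝒜 a → ∃ c : F, FreeAlgebra.lift F a f = c • P) :
    ∃ c : F, Λ P = c • P := by
  obtain ⟨a, ha, hne⟩ := exists_gradedSubst_lift_ne_zero hf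
  obtain ⟨c, hc⟩ := hP a ha
  obtain ⟨c', hc'⟩ := hP (Λ ∘ a) fun p => hΛ p.2 (a p) (ha p)
  have hc0 : c ≠ 0 := left_ne_zero_of_smul (hc ▸ hne)
  refine ⟨c⁻¹ * c', ?_⟩
  rw [mul_smul, ← hc', FreeAlgebra.lift_comp_apply, hc, map_smul, inv_smul_smul₀ hc0]

end GradedAutomorphism

section Elementary

variable (F : Type*) [Field F] {G : Type*} [Group G] {n : ℕ}

def permConjRep (n : ℕ) : Representation F (Equiv.Perm (Fin n)) (Matrix (Fin n) (Fin n) F) where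
  toFun σ := (Matrix.reindexAlgEquiv F F σ).toLinearMap
  map_one' := rfl
  map_mul' _ _ := rfl

theorem permConjRep_apply (σ : Equiv.Perm (Fin n)) (M : Matrix (Fin n) (Fin n) F) :
    permConjRep F n σ M = permConj F σ M :=
  rfl

theorem permConj_mem_elemComp {v : Fin n → G} {σ : Equiv.Perm (Fin n)} (hσ : σ ∈ GradedPerms v)
    {x : G} {M : Matrix (Fin n) (Fin n) F} (hM : M ∈ elemComp F v x) :
    permConj F σ M ∈ elemComp F v x := by
  intro i j hij
  exact hM _ _ fun h => hij (((GradedPerms v).inv_mem hσ i j).symm.trans h)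

end Elementary

theorem hom_of_scalar_multiple_general
    (F : Type*) [Field F]
    {G : Type*} [Group G] {n : ℕ} (v : Fin n → G)
    (P : Matrix (Fin n) (Fin n) F) (f : FreeAlgebra F (ℕ × G))
    (hf : ¬ IsGradedIdentity (elemComp F v) f)
    (hP : ∀ a : ℕ × G → Matrix (Fin n) (Fin n) F, GradedSubst (elemComp F v) a →
      ∃ c : F, FreeAlgebra.lift F a f = c • P) :
    ∃ lam : ↥(GradedPerms v) →* Fˣ,
      ∀ σ : ↥(GradedPerms v),
        permConj F (σ : Equiv.Perm (Fin n)) P = (((lam σ)⁻¹ : Fˣ) : F) • P := by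
  have hline : ∀ σ : ↥(GradedPerms v), ∃ c : F, permConj F σ P = c • P := fun σ =>
    exists_map_eq_smul_of_forall_lift_eq_smul (Matrix.reindexAlgEquiv F F σ.1).toAlgHom
      (fun _ _ => permConj_mem_elemComp F σ.2) hf hP
  obtain ⟨χ, hχ⟩ := Representation.exists_character_of_apply_eq_smul
    ((permConjRep F n).comp (GradedPerms v).subtype) (ne_zero_of_forall_lift_eq_smul hf hP) hline
  exact ⟨χ⁻¹, fun σ => by simpa [permConjRep_apply] using hχ σ⟩

/-- Let `A = Mₙ(F)` carry an elementary grading by a group `G`, with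
`H` the group of permutations `σ` for which `Λ_σ` is a graded automorphism.  If `f` is
not a graded identity for `A` and the result of every `f`-admissible substitution is a
scalar multiple of `P`, then there is a group homomorphism `λ : H → Fˣ` with
`Λ_σ(P) = λ(σ)⁻¹ • P` for all `σ ∈ H`. -/
theorem hom_of_scalar_multiple
    (F : Type*) [Field F] [Infinite F] (hchar : (2 : F) ≠ 0)
    {G : Type*} [Group G] {n : ℕ} (v : Fin n → G)
    (P : Matrix (Fin n) (Fin n) F) (f : FreeAlgebra F (ℕ × G))
    (hf : ¬ IsGradedIdentity (elemComp F v) f)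
    (hP : ∀ a : ℕ × G → Matrix (Fin n) (Fin n) F, GradedSubst (elemComp F v) a →
      ∃ c : F, FreeAlgebra.lift F a f = c • P) :
    ∃ lam : ↥(GradedPerms v) →* Fˣ,
      ∀ σ : ↥(GradedPerms v),
        permConj F (σ : Equiv.Perm (Fin n)) P = (((lam σ)⁻¹ : Fˣ) : F) • P :=
  hom_of_scalar_multiple_general F v P f hf hP
end

section
/- Let M_n(F) carry an elementary grading by a group G with neutral element ε, and let x_{1,g_1}⋯x_{n,g_n} be a multilinear monomial of total degree ε such that the n-tuple (g_1, g_1g_2, …, g_1⋯g_n) consists of pairwise distinct elements of G. If (E_{i_1,j_1},…,E_{i_n,j_n}) and (E_{k_1,l_1},…,E_{k_n,l_n}) are admissible substitutions by matrix units and neither product E_{i_1,j_1}⋯E_{i_n,j_n} nor E_{k_1,l_1}⋯E_{k_n,l_n} is zero, then there exists σ ∈ H with (E_{k_1,l_1},…,E_{k_n,l_n}) = (E_{σ(i_1),σ(j_1)},…,E_{σ(i_n),σ(j_n)}). -/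
/-!
A matrix-unit substitution `(E i₀j₀, …, E iₘjₘ)` with nonzero product is a walk
`i 0 → j 0 = i 1 → ⋯ → j m` on `{1, …, n}`, and admissibility says that step `t` multiplies
the weight `v` by `g t`. Hence `v (j t) = v (i 0) * (g 0 ⋯ g t)`: since these partial products
are pairwise distinct, `j` is a bijection, and since the total product is `1` the walk closes
up, `i 0 = j m`. For two such walks `j` and `l`, the permutation `σ = l ∘ j⁻¹` then satisfies
`v ∘ σ = c • v` for a constant `c`, so `Λ_σ` is graded, and `σ` carries the first walk to the
second.
-/

theorem List.isChain_of_prod_single_ne_zero {ι R : Type*} [DecidableEq ι] [Fintype ι]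
    [Semiring R] {L : List (ι × ι)}
    (hL : (L.map fun p => Matrix.single p.1 p.2 (1 : R)).prod ≠ 0) :
    L.IsChain fun p q => p.2 = q.1 := by
  induction L with
  | nil => exact List.isChain_nil
  | cons p L ih =>
    have hrest : (L.map fun p => Matrix.single p.1 p.2 (1 : R)).prod ≠ 0 := fun h =>
      hL (by rw [List.map_cons, List.prod_cons, h, mul_zero])
    cases L with
    | nil => exact List.isChain_singleton p
    | cons q L =>
      refine List.isChain_cons_cons.mpr ⟨?_, ih hrest⟩
      by_contra hpq
      apply hL
      rw [List.map_cons, List.map_cons, List.prod_cons, List.prod_cons, ← mul_assoc,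
        Matrix.single_mul_single_of_ne _ _ _ _ hpq, zero_mul]

theorem single_mem_elemComp_iff {F : Type*} [Field F] {G : Type*} [Group G] {n : ℕ}
    {v : Fin n → G} {x : G} {a b : Fin n} {c : F} (hc : c ≠ 0) :
    Matrix.single a b c ∈ elemComp F v x ↔ (v a)⁻¹ * v b = x := by
  constructor
  · intro h
    by_contra hx
    exact hc (by simpa using h a b hx)
  · rintro rfl a' b' hne
    rw [Matrix.single_apply, if_neg]
    rintro ⟨rfl, rfl⟩
    exact hne rfl

theorem mem_gradedPerms_of_mul_left {G : Type*} [Group G] {n : ℕ} {v : Fin n → G}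
    {σ : Equiv.Perm (Fin n)} (c : G) (h : ∀ a, v (σ a) = c * v a) : σ ∈ GradedPerms v := by
  intro a b
  rw [h, h, mul_inv_rev, mul_assoc, inv_mul_cancel_left]

structure IsGradedWalk {ι G : Type*} [Group G] {m : ℕ} (v : ι → G) (g : Fin (m + 1) → G)
    (i j : Fin (m + 1) → ι) : Prop where
  deg : ∀ t, (v (i t))⁻¹ * v (j t) = g t
  chain : ∀ t : Fin m, j t.castSucc = i t.succ

theorem isGradedWalk_of_admissible {F : Type*} [Field F] {G : Type*} [Group G] {m : ℕ}
    {v : Fin (m + 1) → G} {g : Fin (m + 1) → G} {i j : Fin (m + 1) → Fin (m + 1)}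
    (hmem : ∀ t, Matrix.single (i t) (j t) (1 : F) ∈ elemComp F v (g t))
    (hprod : (List.ofFn fun t => Matrix.single (i t) (j t) (1 : F)).prod ≠ 0) :
    IsGradedWalk v g i j where
  deg t := (single_mem_elemComp_iff one_ne_zero).mp (hmem t)
  chain t := by
    have hchain := List.isChain_of_prod_single_ne_zero (L := List.ofFn fun t => (i t, j t))
      (by rwa [List.map_ofFn])
    exact List.isChain_ofFn.mp hchain t t.succ.isLt

namespace IsGradedWalk

variable {ι G : Type*} [Group G] {m : ℕ} {v : ι → G} {g : Fin (m + 1) → G}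
  {i j : Fin (m + 1) → ι}

theorem apply_right_eq_mul_partialProd (hw : IsGradedWalk v g i j) (t : Fin (m + 1)) :
    v (j t) = v (i 0) * Fin.partialProd g t.succ := by
  induction t using Fin.induction with
  | zero => rw [Fin.partialProd_succ, Fin.castSucc_zero, Fin.partialProd_zero, one_mul,
      ← hw.deg 0, mul_inv_cancel_left]
  | succ t ih =>
    rw [Fin.partialProd_succ, ← Fin.succ_castSucc, ← mul_assoc, ← ih, hw.chain t,
      ← hw.deg t.succ, mul_inv_cancel_left]

theorem injective_right (hw : IsGradedWalk v g i j)
    (hdistinct : Function.Injective fun t : Fin (m + 1) => Fin.partialProd g t.succ) :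
    Function.Injective j := fun a b hab =>
  hdistinct <| mul_left_cancel <| (hw.apply_right_eq_mul_partialProd a).symm.trans <|
    (congrArg v hab).trans (hw.apply_right_eq_mul_partialProd b)

theorem left_finRotate_eq_right {v : Fin (m + 1) → G} {i j : Fin (m + 1) → Fin (m + 1)}
    (hw : IsGradedWalk v g i j)
    (hdistinct : Function.Injective fun t : Fin (m + 1) => Fin.partialProd g t.succ)
    (htotal : Fin.partialProd g (Fin.last (m + 1)) = 1) (t : Fin (m + 1)) :
    i (finRotate (m + 1) t) = j t := by
  induction t using Fin.lastCases with
  | last =>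
    obtain ⟨s, hs⟩ := Finite.injective_iff_surjective.mp (hw.injective_right hdistinct) (i 0)
    have hs_last : Fin.partialProd g s.succ = Fin.partialProd g (Fin.last m).succ := by
      rw [Fin.succ_last, htotal]
      simpa [hs] using (hw.apply_right_eq_mul_partialProd s).symm
    rw [finRotate_last, ← hs, hdistinct hs_last]
  | cast t =>
    rw [hw.chain t]
    congr 1
    ext
    simp [finRotate_apply]

end IsGradedWalk

/-- Let `Mₙ(F)` carry an elementary grading induced by `v` and let
`x_{1,g₁} ⋯ x_{n,gₙ}` be a multilinear monomial of total degree `ε` whose partial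
degrees `g₁, g₁g₂, …, g₁⋯gₙ` are pairwise distinct.  If two admissible substitutions by
matrix units both have non-zero product, then the second substitution is obtained from
the first by applying `Λ_σ` for some `σ ∈ H`. -/
theorem admissible_unit_substitutions_related_by_graded_perm
    (F : Type*) [Field F] {G : Type*} [Group G] {n : ℕ} (v : Fin n → G)
    (gdeg : Fin n → G)
    (hdistinct : Function.Injective fun t : Fin n =>
      ((List.ofFn gdeg).take ((t : ℕ) + 1)).prod)
    (htotal : (List.ofFn gdeg).prod = 1)
    (i j k l : Fin n → Fin n)
    (hij : ∀ t, Matrix.single (i t) (j t) (1 : F) ∈ elemComp F v (gdeg t))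
    (hkl : ∀ t, Matrix.single (k t) (l t) (1 : F) ∈ elemComp F v (gdeg t))
    (hij0 : (List.ofFn fun t => Matrix.single (i t) (j t) (1 : F)).prod ≠ 0)
    (hkl0 : (List.ofFn fun t => Matrix.single (k t) (l t) (1 : F)).prod ≠ 0) :
    ∃ σ ∈ GradedPerms v, ∀ t, k t = σ (i t) ∧ l t = σ (j t) := by
  rcases n with _ | m
  · exact ⟨1, one_mem _, fun t => t.elim0⟩
  have htotal' : Fin.partialProd gdeg (Fin.last (m + 1)) = 1 := by
    rwa [Fin.partialProd, Fin.val_last, List.take_of_length_le (by simp)]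
  have hw₁ := isGradedWalk_of_admissible hij hij0
  have hw₂ := isGradedWalk_of_admissible hkl hkl0
  have hj := (hw₁.injective_right hdistinct).bijective_of_finite
  have hl := (hw₂.injective_right hdistinct).bijective_of_finite
  set σ := (Equiv.ofBijective j hj).symm.trans (Equiv.ofBijective l hl)
  have hσ : ∀ t, σ (j t) = l t := fun t =>
    congrArg l (Equiv.ofBijective_symm_apply_apply j hj t)
  refine ⟨σ, mem_gradedPerms_of_mul_left (v (k 0) * (v (i 0))⁻¹) ?_, ?_⟩
  · intro a
    obtain ⟨t, rfl⟩ := hj.surjective a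
    rw [hσ, hw₂.apply_right_eq_mul_partialProd, hw₁.apply_right_eq_mul_partialProd, mul_assoc,
      inv_mul_cancel_left]
  · refine fun t => ⟨?_, (hσ t).symm⟩
    obtain ⟨s, rfl⟩ := (finRotate (m + 1)).surjective t
    rw [hw₁.left_finRotate_eq_right hdistinct htotal',
      hw₂.left_finRotate_eq_right hdistinct htotal', hσ]
end

section
/- If M_n(F) carries an elementary grading induced by an n-tuple of pairwise distinct elements of a group G, then the canonical action on {1,…,n} of the group H of permutations whose associated automorphisms are graded is free: every H-orbit has exactly |H| elements, and in particular |H| divides n. -/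
/-- If `Mₙ(F)` carries an elementary grading induced by an `n`-tuple
of pairwise distinct elements of a group `G`, then the canonical action of the group `H`
of permutations with graded associated automorphism on `{1, …, n}` is free: every orbit
has exactly `|H|` elements; in particular `|H|` divides `n`. -/
theorem gradedPerms_orbits_card
    (F : Type*) [Field F] {G : Type*} [Group G] {n : ℕ} (v : Fin n → G)
    (hv : Function.Injective v) :
    (∀ i : Fin n,
        Nat.card {j : Fin n | ∃ σ ∈ GradedPerms v, σ i = j} = Nat.card ↥(GradedPerms v))
      ∧ Nat.card ↥(GradedPerms v) ∣ n := by
  classical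
  have key : ∀ σ ∈ GradedPerms v, ∀ i : Fin n, σ i = i → σ = 1 := by
    intro σ hσ i hi
    refine Equiv.ext fun j => ?_
    have h := hσ i j
    rw [hi] at h
    have h2 : v (σ j) = v j := mul_left_cancel h
    simpa using hv h2
  have horb : ∀ i : Fin n,
      Nat.card {j : Fin n | ∃ σ ∈ GradedPerms v, σ i = j}
        = Nat.card ↥(GradedPerms v) := by
    intro i
    have hb : Function.Bijective
        (fun σ : ↥(GradedPerms v) =>
          (⟨σ.1 i, σ.1, σ.2, rfl⟩ : {j : Fin n | ∃ σ ∈ GradedPerms v, σ i = j})) := by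
      constructor
      · intro σ τ h
        have h' : σ.1 i = τ.1 i := congrArg Subtype.val h
        have hfix : (τ.1⁻¹ * σ.1) i = i := by
          simp [Equiv.Perm.mul_apply, h']
        have h1 : τ.1⁻¹ * σ.1 = 1 :=
          key _ (mul_mem (inv_mem τ.2) σ.2) i hfix
        have h3 : σ.1 = τ.1 := by
          have := congrArg (fun x => τ.1 * x) h1
          simpa [mul_assoc] using this
        exact Subtype.ext h3
      · rintro ⟨j, σ, hσ, rfl⟩
        exact ⟨⟨σ, hσ⟩, rfl⟩
    exact (Nat.card_congr (Equiv.ofBijective _ hb)).symm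
  refine ⟨horb, ?_⟩
  have hcardorb : ∀ x : Fin n,
      Nat.card (MulAction.orbit (GradedPerms v) x) = Nat.card ↥(GradedPerms v) := by
    intro x
    rw [← horb x]
    apply Nat.card_congr
    apply Equiv.setCongr
    ext j
    simp only [MulAction.mem_orbit_iff, Set.mem_setOf_eq]
    constructor
    · rintro ⟨⟨σ, hσ⟩, rfl⟩
      exact ⟨σ, hσ, rfl⟩
    · rintro ⟨σ, hσ, rfl⟩
      exact ⟨⟨σ, hσ⟩, rfl⟩
  let s := MulAction.orbitRel (GradedPerms v) (Fin n)
  have hsum : (Finset.univ : Finset (Fin n)).card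
      = ∑ q : Quotient s, (Finset.univ.filter (fun i => (⟦i⟧ : Quotient s) = q)).card :=
    Finset.card_eq_sum_card_fiberwise (fun i _ => Finset.mem_univ _)
  have hfiber : ∀ q : Quotient s,
      (Finset.univ.filter (fun i => (⟦i⟧ : Quotient s) = q)).card
        = Nat.card ↥(GradedPerms v) := by
    intro q
    have : (Finset.univ.filter (fun i => (⟦i⟧ : Quotient s) = q)).card
        = Fintype.card {i : Fin n // (⟦i⟧ : Quotient s) = q} :=
      (Fintype.card_subtype _).symm
    rw [this, ← Nat.card_eq_fintype_card, ← hcardorb q.out]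
    apply Nat.card_congr
    apply Equiv.subtypeEquivRight
    intro i
    exact Quotient.mk_eq_iff_out.trans MulAction.orbitRel_apply
  have : n = (Fintype.card (Quotient s)) * Nat.card ↥(GradedPerms v) := by
    have := hsum
    simp only [hfiber, Finset.sum_const, smul_eq_mul, Finset.card_univ] at this
    simpa using this
  exact ⟨Fintype.card (Quotient s), this.trans (Nat.mul_comm _ _)⟩
end

section
/- Let A = M_n(F) carry the elementary grading induced by an n-tuple (g_1,…,g_n) of pairwise distinct elements of a group G, and let H ≤ S_n be the group of permutations whose associated automorphisms Λ_σ are graded. Then the grading of A is a crossed product grading by the support of the grading if and only if |H| = n; moreover, in this case the group H is isomorphic to the support (which is then a subgroup of G of order n). -/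
section Support

variable (F : Type*) [Field F] {G : Type*} [Group G] {n : ℕ}

/-- The support of the elementary grading induced by `v`. -/
def gradingSupport (v : Fin n → G) : Set G := {g : G | elemComp F v g ≠ ⊥}

end Support

/-!
A permutation `σ` lies in `GradedPerms v` exactly when it acts on the tuple `v` as a left
translation: `v (σ i) = g * v i` for one `g ∈ G`. Fixing an index `i₀`, the map
`σ ↦ (v i₀)⁻¹ * v (σ i₀)` is therefore an injective homomorphism from `GradedPerms v` into the
support `{(v i)⁻¹ * v j}`, and `σ ↦ σ i₀` shows `|GradedPerms v| ≤ n`. If `|GradedPerms v| = n`,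
every index is `σ i₀` for some `σ`, so every `(v i)⁻¹ * v j` is a quotient of two values of
the homomorphism and the support is its range. Conversely, if the support is a subgroup `S`
of order `n`, then `S = (v i₀)⁻¹ • range v`, which is stable under left multiplication by `S`;
these translations give `n` graded permutations.
-/

section GradedPerms

variable {G : Type*} [Group G] {n : ℕ} {v : Fin n → G}

lemma mem_gradingSupport_iff (F : Type*) [Field F] (v : Fin n → G) (g : G) :
    g ∈ gradingSupport F v ↔ ∃ i j, (v i)⁻¹ * v j = g := by
  rw [gradingSupport, Set.mem_ofPred_eq, Submodule.ne_bot_iff]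
  constructor
  · rintro ⟨M, hM, hM0⟩
    by_contra! h
    exact hM0 (Matrix.ext fun i j => hM i j (h i j))
  · rintro ⟨i, j, rfl⟩
    refine ⟨Matrix.single i j 1, fun k l hkl => ?_, fun h => one_ne_zero (α := F) ?_⟩
    · exact Matrix.single_apply_of_ne _ _ _ _ _ (by rintro ⟨rfl, rfl⟩; exact hkl rfl)
    · simpa using congrFun (congrFun h i) j

lemma inv_mul_mem_gradingSupport (F : Type*) [Field F] (v : Fin n → G) (i j : Fin n) :
    (v i)⁻¹ * v j ∈ gradingSupport F v :=
  (mem_gradingSupport_iff F v _).2 ⟨i, j, rfl⟩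

lemma apply_eq_of_mem_gradedPerms {σ : Equiv.Perm (Fin n)} (hσ : σ ∈ GradedPerms v)
    (i j : Fin n) : v (σ j) = v (σ i) * (v i)⁻¹ * v j := by
  rw [mul_assoc, ← hσ i j, mul_inv_cancel_left]

lemma eq_one_of_mem_gradedPerms_of_apply_eq_self (hv : Function.Injective v)
    {σ : Equiv.Perm (Fin n)} (hσ : σ ∈ GradedPerms v) {i : Fin n} (hi : σ i = i) : σ = 1 :=
  Equiv.ext fun j => hv <| by
    rw [apply_eq_of_mem_gradedPerms hσ i j, hi, mul_inv_cancel, one_mul, Equiv.Perm.one_apply]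

lemma injective_apply_gradedPerms (hv : Function.Injective v) (i : Fin n) :
    Function.Injective fun σ : GradedPerms v => σ.1 i := by
  intro σ τ h
  rw [← inv_mul_eq_one]
  refine Subtype.ext (eq_one_of_mem_gradedPerms_of_apply_eq_self hv (σ⁻¹ * τ).2 (i := i) ?_)
  change σ.1⁻¹ (τ.1 i) = i
  rw [← show σ.1 i = τ.1 i from h]
  exact σ.1.symm_apply_apply i

lemma card_gradedPerms_le (hv : Function.Injective v) (i₀ : Fin n) :
    Nat.card (GradedPerms v) ≤ n :=
  (Nat.card_le_card_of_injective _ (injective_apply_gradedPerms hv i₀)).trans_eq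
    (Nat.card_fin n)

lemma exists_mem_gradedPerms_apply_eq_mul (hv : Function.Injective v) (g : G)
    (hg : ∀ i, g * v i ∈ Set.range v) : ∃ σ ∈ GradedPerms v, ∀ i, v (σ i) = g * v i := by
  choose f hf using hg
  have hf_inj : Function.Injective f := fun i j hij =>
    hv (mul_left_cancel ((hf i).symm.trans (hij ▸ hf j)))
  refine ⟨Equiv.ofBijective f (Finite.injective_iff_bijective.mp hf_inj), fun i j => ?_, hf⟩
  simp only [Equiv.ofBijective_apply, hf, mul_inv_rev, mul_assoc, inv_mul_cancel_left]

/-- The degree of the matrix unit `E i₀ (σ i₀)`. -/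
def degreeHom (v : Fin n → G) (i₀ : Fin n) : GradedPerms v →* G where
  toFun σ := (v i₀)⁻¹ * v (σ.1 i₀)
  map_one' := by simp
  map_mul' σ τ := by
    change (v i₀)⁻¹ * v (σ.1 (τ.1 i₀)) = (v i₀)⁻¹ * v (σ.1 i₀) * ((v i₀)⁻¹ * v (τ.1 i₀))
    rw [apply_eq_of_mem_gradedPerms σ.2 i₀ (τ.1 i₀)]
    group

lemma degreeHom_apply (i₀ : Fin n) (σ : GradedPerms v) :
    degreeHom v i₀ σ = (v i₀)⁻¹ * v (σ.1 i₀) :=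
  rfl

lemma degreeHom_injective (hv : Function.Injective v) (i₀ : Fin n) :
    Function.Injective (degreeHom v i₀) := by
  intro σ τ h
  exact injective_apply_gradedPerms hv i₀ (hv (mul_left_cancel h))

lemma range_degreeHom_subset_gradingSupport (F : Type*) [Field F] (i₀ : Fin n) :
    ((degreeHom v i₀).range : Set G) ⊆ gradingSupport F v := by
  rintro _ ⟨σ, rfl⟩
  exact inv_mul_mem_gradingSupport F v i₀ (σ.1 i₀)

lemma gradingSupport_subset_range_degreeHom (F : Type*) [Field F] (hv : Function.Injective v)
    (hcard : Nat.card (GradedPerms v) = n) (i₀ : Fin n) :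
    gradingSupport F v ⊆ (degreeHom v i₀).range := by
  have hsurj : Function.Surjective fun σ : GradedPerms v => σ.1 i₀ :=
    ((Nat.bijective_iff_injective_and_card _).2
      ⟨injective_apply_gradedPerms hv i₀, by rw [hcard, Nat.card_fin]⟩).2
  intro g hg
  obtain ⟨i, j, rfl⟩ := (mem_gradingSupport_iff F v g).1 hg
  obtain ⟨σ, rfl⟩ := hsurj i
  obtain ⟨τ, rfl⟩ := hsurj j
  refine ⟨σ⁻¹ * τ, ?_⟩
  rw [map_mul, map_inv, degreeHom_apply, degreeHom_apply]
  group

lemma exists_inv_mul_eq_of_coe_eq_gradingSupport (F : Type*) [Field F]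
    (hv : Function.Injective v) {S : Subgroup G} (hS : (S : Set G) = gradingSupport F v)
    (hcard : Nat.card S = n) (i₀ : Fin n) {s : G} (hs : s ∈ S) :
    ∃ j, (v i₀)⁻¹ * v j = s := by
  have hmem (j : Fin n) : (v i₀)⁻¹ * v j ∈ S := by
    rw [← SetLike.mem_coe, hS]
    exact inv_mul_mem_gradingSupport F v i₀ j
  have hbij : Function.Bijective fun j => (⟨(v i₀)⁻¹ * v j, hmem j⟩ : S) := by
    have : Finite S := Nat.finite_of_card_ne_zero (hcard ▸ i₀.pos.ne')
    refine (Nat.bijective_iff_injective_and_card _).2 ⟨fun j k hjk => ?_, by simp [hcard]⟩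
    exact hv (mul_left_cancel (congrArg Subtype.val hjk))
  obtain ⟨j, hj⟩ := hbij.2 ⟨s, hs⟩
  exact ⟨j, congrArg Subtype.val hj⟩

lemma le_range_degreeHom_of_coe_eq_gradingSupport (F : Type*) [Field F]
    (hv : Function.Injective v) {S : Subgroup G} (hS : (S : Set G) = gradingSupport F v)
    (hcard : Nat.card S = n) (i₀ : Fin n) : S ≤ (degreeHom v i₀).range := by
  intro s hs
  have hg (i : Fin n) : v i₀ * s * (v i₀)⁻¹ * v i ∈ Set.range v := by
    have hi : (v i₀)⁻¹ * v i ∈ S := by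
      rw [← SetLike.mem_coe, hS]
      exact inv_mul_mem_gradingSupport F v i₀ i
    obtain ⟨j, hj⟩ :=
      exists_inv_mul_eq_of_coe_eq_gradingSupport F hv hS hcard i₀ (S.mul_mem hs hi)
    refine ⟨j, ?_⟩
    rw [← mul_inv_cancel_left (v i₀) (v j), hj]
    group
  obtain ⟨σ, hσ, hσv⟩ := exists_mem_gradedPerms_apply_eq_mul hv _ hg
  refine ⟨⟨σ, hσ⟩, ?_⟩
  rw [degreeHom_apply, hσv]
  group

end GradedPerms

/-- Let `A = Mₙ(F)` carry the elementary grading induced by an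
`n`-tuple of pairwise distinct elements of a group `G` and let `H` be the group of
permutations with graded associated automorphism.  The grading is a crossed product
grading by the support (the support is a subgroup of order `n`) if and only if
`|H| = n`; moreover, in this case `H` is isomorphic to the support. -/
theorem crossed_product_iff_card_gradedPerms
    (F : Type*) [Field F] {G : Type*} [Group G] {n : ℕ} (v : Fin n → G)
    (hv : Function.Injective v) :
    ((∃ S : Subgroup G, (S : Set G) = gradingSupport F v ∧ Nat.card ↥S = n) ↔
        Nat.card ↥(GradedPerms v) = n)
      ∧ (Nat.card ↥(GradedPerms v) = n →
          ∃ S : Subgroup G, (S : Set G) = gradingSupport F v ∧ Nat.card ↥S = n ∧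
            Nonempty (↥(GradedPerms v) ≃* ↥S)) := by
  have of_card (hcard : Nat.card (GradedPerms v) = n) : ∃ S : Subgroup G,
      (S : Set G) = gradingSupport F v ∧ Nat.card S = n ∧ Nonempty (GradedPerms v ≃* S) := by
    have i₀ : Fin n := ⟨0, hcard ▸ Nat.card_pos⟩
    let e := MonoidHom.ofInjective (degreeHom_injective hv i₀)
    refine ⟨(degreeHom v i₀).range, ?_, ?_, ⟨e⟩⟩
    · exact (range_degreeHom_subset_gradingSupport F i₀).antisymm
        (gradingSupport_subset_range_degreeHom F hv hcard i₀)
    · rw [← Nat.card_congr e.toEquiv, hcard]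
  refine ⟨⟨fun ⟨S, hS, hcard⟩ => ?_, fun h => (of_card h).imp fun _ hS => ⟨hS.1, hS.2.1⟩⟩,
    of_card⟩
  obtain ⟨i₀, -, -⟩ := (mem_gradingSupport_iff F v 1).1 (hS ▸ S.one_mem)
  let e := MonoidHom.ofInjective (degreeHom_injective hv i₀)
  have hle := le_range_degreeHom_of_coe_eq_gradingSupport F hv hS hcard i₀
  refine (card_gradedPerms_le hv i₀).antisymm ?_
  calc n = Nat.card S := hcard.symm
    _ ≤ Nat.card (GradedPerms v) :=
      Nat.card_le_card_of_injective (e.symm ∘ Subgroup.inclusion hle)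
        (e.symm.injective.comp (Subgroup.inclusion_injective hle))
end

section
/- Let R be an F-algebra with a regular grading by an abelian group H with neutral element ε. If the regular grading is minimal and for every h, h′ ∈ H and every non-zero r ∈ R_h there exists s ∈ R_{h′} with r·s ≠ 0, then the centre of R equals the neutral component: Z(R) = R_ε. -/
section Regular

variable {F : Type*} [Field F] {H : Type*} [CommGroup H] {R : Type*} [Ring R] [Algebra F R]

/-- A regular grading of `R` by an abelian group `H` with commutation function `β`:
it is a grading such that (P1) every tuple of degrees is realized by elements with
non-zero product and (P2) homogeneous elements commute up to the scalar given by `β`. -/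
structure IsRegularGrading [DecidableEq H] (ℛ : H → Submodule F R) (β : H → H → Fˣ) :
    Prop where
  internal : DirectSum.IsInternal ℛ
  mul_mem : ∀ {g h : H} {x y : R}, x ∈ ℛ g → y ∈ ℛ h → x * y ∈ ℛ (g * h)
  prod_ne_zero : ∀ (m : ℕ) (hs : Fin m → H), ∃ r : Fin m → R,
    (∀ i, r i ∈ ℛ (hs i)) ∧ (List.ofFn r).prod ≠ 0
  comm : ∀ {g h : H} {x y : R}, x ∈ ℛ g → y ∈ ℛ h → x * y = ((β g h : Fˣ) : F) • (y * x)

end Regular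

section Aux

variable {F : Type*} [Field F] {H : Type*} [CommGroup H] [DecidableEq H]
  {R : Type*} [Ring R] [Algebra F R]

/-- `β 1 h` acts trivially. -/
lemma beta_one_left {ℛ : H → Submodule F R} {β : H → H → Fˣ}
    (hreg : IsRegularGrading ℛ β) (h : H) : ((β 1 h : Fˣ) : F) = 1 := by
  obtain ⟨r, hr, hne⟩ := hreg.prod_ne_zero 3 ![1, 1, h]
  set a := r 0; set b := r 1; set c := r 2
  have ha : a ∈ ℛ 1 := hr 0
  have hb : b ∈ ℛ 1 := hr 1
  have hc : c ∈ ℛ h := hr 2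
  have hprod : a * b * c ≠ 0 := by
    simpa [List.ofFn_succ, mul_assoc] using hne
  set q : F := ((β 1 h : Fˣ) : F) with hq
  have hab : a * b ∈ ℛ 1 := by simpa using hreg.mul_mem ha hb
  have h1 : a * b * c = q • (c * (a * b)) := hreg.comm hab hc
  have h2 : a * b * c = (q * q) • (c * (a * b)) := by
    have hbc : b * c = q • (c * b) := hreg.comm hb hc
    have hac : a * c = q • (c * a) := hreg.comm ha hc
    calc a * b * c = a * (b * c) := by rw [mul_assoc]
      _ = a * (q • (c * b)) := by rw [hbc]
      _ = q • (a * c * b) := by rw [mul_smul_comm, mul_assoc]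
      _ = q • ((q • (c * a)) * b) := by rw [hac]
      _ = (q * q) • (c * (a * b)) := by
          rw [smul_mul_assoc, smul_smul, mul_assoc]
  have hz : c * (a * b) ≠ 0 := by
    intro hz0; apply hprod; rw [h1, hz0, smul_zero]
  have hqe : (q * q) • (c * (a * b)) = q • (c * (a * b)) := by rw [← h2, ← h1]
  have : (q * q - q) • (c * (a * b)) = 0 := by rw [sub_smul, hqe, sub_self]
  have hq0 : q ≠ 0 := Units.ne_zero _
  rcases smul_eq_zero.mp this with h0 | h0
  · have hfac : q * (q - 1) = 0 := by linear_combination h0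
    rcases mul_eq_zero.mp hfac with h' | h'
    · exact absurd h' hq0
    · exact sub_eq_zero.mp h'
  · exact absurd h0 hz

/-- `β h h' * β h' h = 1` in `F`. -/
lemma beta_mul_symm {ℛ : H → Submodule F R} {β : H → H → Fˣ}
    (hreg : IsRegularGrading ℛ β) (h h' : H) :
    ((β h h' : Fˣ) : F) * ((β h' h : Fˣ) : F) = 1 := by
  obtain ⟨r, hr, hne⟩ := hreg.prod_ne_zero 2 ![h, h']
  set a := r 0; set b := r 1
  have ha : a ∈ ℛ h := hr 0
  have hb : b ∈ ℛ h' := hr 1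
  have hprod : a * b ≠ 0 := by simpa [List.ofFn_succ] using hne
  have h1 : a * b = ((β h h' : Fˣ) : F) • (b * a) := hreg.comm ha hb
  have h2 : b * a = ((β h' h : Fˣ) : F) • (a * b) := hreg.comm hb ha
  have : a * b = (((β h h' : Fˣ) : F) * ((β h' h : Fˣ) : F)) • (a * b) :=
    calc a * b = ((β h h' : Fˣ) : F) • (b * a) := h1
      _ = ((β h h' : Fˣ) : F) • (((β h' h : Fˣ) : F) • (a * b)) := by rw [h2]
      _ = (((β h h' : Fˣ) : F) * ((β h' h : Fˣ) : F)) • (a * b) := by rw [smul_smul]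
  have h0 : (((β h h' : Fˣ) : F) * ((β h' h : Fˣ) : F) - 1) • (a * b) = 0 := by
    rw [sub_smul, one_smul, ← this, sub_self]
  rcases smul_eq_zero.mp h0 with hl | hl
  · exact sub_eq_zero.mp hl
  · exact absurd hl hprod

end Aux

/-- Let `R` be an `F`-algebra with a regular grading by an abelian
group `H`.  If the regular grading is minimal and for all `h, h'` and every non-zero
`r ∈ R_h` there is `s ∈ R_{h'}` with `r * s ≠ 0`, then the centre of `R` is the neutral
component. -/
theorem center_eq_neutral_component_of_minimal
    (F : Type*) [Field F] [Infinite F] (hchar : (2 : F) ≠ 0)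
    {H : Type*} [CommGroup H] [DecidableEq H]
    {R : Type*} [Ring R] [Algebra F R]
    (ℛ : H → Submodule F R) (β : H → H → Fˣ)
    (hreg : IsRegularGrading ℛ β)
    (hmin : ∀ h : H, h ≠ 1 → ∃ h' : H, β h h' ≠ 1)
    (hnd : ∀ (h h' : H) (r : R), r ∈ ℛ h → r ≠ 0 → ∃ s ∈ ℛ h', r * s ≠ 0) :
    Set.center R = (ℛ 1 : Set R) := by
  classical
  letI : DirectSum.Decomposition ℛ := hreg.internal.chooseDecomposition
  apply Set.eq_of_subset_of_subset
  · -- center ⊆ ℛ 1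
    intro x hx
    have hxc : ∀ y : R, x * y = y * x := fun y =>
      ((Semigroup.mem_center_iff.mp hx) y).symm
    -- show each component of degree h ≠ 1 vanishes
    have hcomp : ∀ h : H, h ≠ 1 → ((DirectSum.decompose ℛ x h : ℛ h) : R) = 0 := by
      intro h hne1
      by_contra hxh
      obtain ⟨h', hβ⟩ := hmin h hne1
      obtain ⟨s, hs, hxs⟩ := hnd h h' _ (DirectSum.decompose ℛ x h).2 hxh
      set c := DirectSum.decompose ℛ x with hc
      set xh : R := ((c h : ℛ h) : R)
      -- projection onto degree h * h'
      set P : R →ₗ[F] R := (ℛ (h * h')).subtype ∘ₗ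
        ((DFinsupp.lapply (h * h')) ∘ₗ
          (DirectSum.decomposeLinearEquiv ℛ).toLinearMap) with hP
      have hPdef : ∀ z : R, P z = ((DirectSum.decompose ℛ z (h * h') : ℛ (h * h')) : R) := by
        intro z; rfl
      have hPsame : ∀ z : R, z ∈ ℛ (h * h') → P z = z := by
        intro z hz; rw [hPdef]; exact DirectSum.decompose_of_mem_same ℛ hz
      have hPne : ∀ (g : H), g ≠ h → ∀ z : R, z ∈ ℛ (g * h') → P z = 0 := by
        intro g hg z hz
        rw [hPdef]
        exact DirectSum.decompose_of_mem_ne ℛ hz (by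
          intro hgh; exact hg (mul_right_cancel hgh))
      have hxsum : x = ∑ g ∈ c.support, ((c g : ℛ g) : R) :=
        (DirectSum.sum_support_decompose ℛ x).symm
      have hmem : h ∈ c.support := by
        rw [DFinsupp.mem_support_iff]
        intro h0
        apply hxh
        show ((c h : ℛ h) : R) = 0
        rw [h0]; rfl
      -- compute P (x * s)
      have hP1 : P (x * s) = xh * s := by
        rw [hxsum, Finset.sum_mul, map_sum]
        rw [Finset.sum_eq_single_of_mem h hmem]
        · exact hPsame _ (hreg.mul_mem (c h).2 hs)
        · intro g _ hg
          exact hPne g hg _ (hreg.mul_mem (c g).2 hs)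
      have hP2 : P (s * x) = ((β h' h : Fˣ) : F) • (xh * s) := by
        rw [hxsum, Finset.mul_sum, map_sum]
        rw [Finset.sum_eq_single_of_mem h hmem]
        · rw [hreg.comm hs (c h).2]
          rw [map_smul P, hPsame _ (hreg.mul_mem (c h).2 hs)]
        · intro g _ hg
          rw [hreg.comm hs (c g).2, map_smul P,
            hPne g hg _ (hreg.mul_mem (c g).2 hs), smul_zero]
      have heq : xh * s = ((β h' h : Fˣ) : F) • (xh * s) :=
        calc xh * s = P (x * s) := hP1.symm
          _ = P (s * x) := by rw [hxc s]
          _ = ((β h' h : Fˣ) : F) • (xh * s) := hP2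
      have hb1 : ((β h' h : Fˣ) : F) = 1 := by
        have h0 : (((β h' h : Fˣ) : F) - 1) • (xh * s) = 0 := by
          rw [sub_smul, one_smul, ← heq, sub_self]
        rcases smul_eq_zero.mp h0 with h0 | h0
        · exact sub_eq_zero.mp h0
        · exact absurd h0 hxs
      apply hβ
      have := beta_mul_symm hreg h h'
      rw [hb1, mul_one] at this
      exact Units.ext this
    -- now x is the sum of its components, all of degree 1
    have hxsum : x = ∑ g ∈ (DirectSum.decompose ℛ x).support,
        ((DirectSum.decompose ℛ x g : ℛ g) : R) :=
      (DirectSum.sum_support_decompose ℛ x).symm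
    rw [hxsum]
    apply Submodule.sum_mem
    intro g hg
    rcases eq_or_ne g 1 with rfl | hg1
    · exact (DirectSum.decompose ℛ x 1).2
    · rw [hcomp g hg1]; exact (ℛ 1).zero_mem
  · -- ℛ 1 ⊆ center
    intro x hx
    rw [SetLike.mem_coe] at hx
    apply Semigroup.mem_center_iff.mpr
    intro y
    have hy : y ∈ (⊤ : Submodule F R) := trivial
    rw [← hreg.internal.submodule_iSup_eq_top] at hy
    induction hy using Submodule.iSup_induction' with
    | mem h z hz =>
      rw [hreg.comm hx hz, beta_one_left hreg h, one_smul]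
    | zero => rw [zero_mul, mul_zero]
    | add a _ b _ ha hb => rw [add_mul, mul_add, ha, hb]
end

section
/- Let F be an infinite field and let R be an F-algebra with a regular grading by an abelian group H that satisfies condition (R1). If f and g are polynomials in F⟨X_H⟩ in disjoint sets of variables and neither f nor g is an H-graded identity for R, then f·g is not an H-graded identity for R. -/
section CondR1

variable {F : Type*} [Field F] {H : Type*} [CommGroup H] {R : Type*} [Ring R] [Algebra F R]

/-- Condition (R1): for any two monomials in disjoint sets of variables that are not
`H`-graded identities for `R`, their product is not an `H`-graded identity for `R`. -/
def CondR1 (ℛ : H → Submodule F R) : Prop :=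
  ∀ w₁ w₂ : List (ℕ × H), w₁.Disjoint w₂ →
    ¬ IsGradedIdentity ℛ ((w₁.map (FreeAlgebra.ι F)).prod) →
    ¬ IsGradedIdentity ℛ ((w₂.map (FreeAlgebra.ι F)).prod) →
    ¬ IsGradedIdentity ℛ ((w₁.map (FreeAlgebra.ι F)).prod * (w₂.map (FreeAlgebra.ι F)).prod)

end CondR1


section ProofHelpers

variable {F : Type*} [Field F] {H : Type*} [CommGroup H] [DecidableEq H]
  {R : Type*} [Ring R] [Algebra F R]

/-- Value of a graded word (monomial) under a substitution. -/
noncomputable def wordVal (a : ℕ × H → R) (m : Multiset (ℕ × H)) : R :=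
  (m.toList.map a).prod

theorem lift_word (a : ℕ × H → R) (w : List (ℕ × H)) :
    FreeAlgebra.lift F a ((w.map (FreeAlgebra.ι F)).prod) = (w.map a).prod := by
  rw [map_list_prod, List.map_map]
  congr 1
  ext x
  simp [FreeAlgebra.lift_ι_apply]

theorem perm_scalar {ℛ : H → Submodule F R} {β : H → H → Fˣ} (hreg : IsRegularGrading ℛ β)
    {w w' : List (ℕ × H)} (h : w.Perm w') :
    ∃ c : Fˣ, ∀ a : ℕ × H → R, GradedSubst ℛ a →
      (w.map a).prod = (c : F) • (w'.map a).prod := by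
  induction h with
  | nil => exact ⟨1, fun a _ => by simp⟩
  | cons x h ih =>
    obtain ⟨c, hc⟩ := ih
    exact ⟨c, fun a ha => by
      simp only [List.map_cons, List.prod_cons, hc a ha, mul_smul_comm]⟩
  | swap x y l =>
    refine ⟨β y.2 x.2, fun a ha => ?_⟩
    simp only [List.map_cons, List.prod_cons, ← mul_assoc]
    rw [hreg.comm (ha y) (ha x), smul_mul_assoc]
  | trans h1 h2 ih1 ih2 =>
    obtain ⟨c1, hc1⟩ := ih1
    obtain ⟨c2, hc2⟩ := ih2
    exact ⟨c1 * c2, fun a ha => by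
      rw [hc1 a ha, hc2 a ha, smul_smul]; norm_cast⟩

theorem wordVal_mul {ℛ : H → Submodule F R} {β : H → H → Fˣ} (hreg : IsRegularGrading ℛ β)
    (m n : Multiset (ℕ × H)) :
    ∃ c : Fˣ, ∀ a : ℕ × H → R, GradedSubst ℛ a →
      wordVal a m * wordVal a n = (c : F) • wordVal a (m + n) := by
  have hperm : (m.toList ++ n.toList).Perm ((m + n).toList) := by
    rw [← Multiset.coe_eq_coe, Multiset.coe_toList, ← Multiset.coe_add,
      Multiset.coe_toList, Multiset.coe_toList]
  obtain ⟨c, hc⟩ := perm_scalar hreg hperm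
  refine ⟨c, fun a ha => ?_⟩
  have := hc a ha
  rwa [List.map_append, List.prod_append] at this

/-- Normal form: every polynomial using variables in `S` evaluates, on every graded
substitution, as a fixed linear combination of values of fixed words. -/
theorem normal_form {ℛ : H → Submodule F R} {β : H → H → Fˣ} (hreg : IsRegularGrading ℛ β)
    {S : Set (ℕ × H)} {f : FreeAlgebra F (ℕ × H)} (hf : UsesVars S f) :
    ∃ (D : Finset (Multiset (ℕ × H))) (lam : Multiset (ℕ × H) → F),
      (∀ m ∈ D, ∀ x ∈ m, x ∈ S) ∧
      ∀ a : ℕ × H → R, GradedSubst ℛ a →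
        FreeAlgebra.lift F a f = ∑ m ∈ D, lam m • wordVal a m := by
  classical
  induction hf using Algebra.adjoin_induction with
  | mem x hx =>
    obtain ⟨p, hp, rfl⟩ := hx
    refine ⟨{({p} : Multiset (ℕ × H))}, fun _ => 1, ?_, fun a ha => ?_⟩
    · intro m hm x hxm
      simp only [Finset.mem_singleton] at hm
      subst hm
      simp only [Multiset.mem_singleton] at hxm
      subst hxm; exact hp
    · simp [wordVal, FreeAlgebra.lift_ι_apply, Multiset.toList_singleton]
  | algebraMap r =>
    refine ⟨{(0 : Multiset (ℕ × H))}, fun _ => r, ?_, fun a ha => ?_⟩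
    · intro m hm x hxm
      simp only [Finset.mem_singleton] at hm
      subst hm; simp at hxm
    · simp [wordVal, Multiset.toList_zero, Algebra.algebraMap_eq_smul_one]
  | add x y hx hy ihx ihy =>
    obtain ⟨D₁, lam₁, hS₁, hv₁⟩ := ihx
    obtain ⟨D₂, lam₂, hS₂, hv₂⟩ := ihy
    refine ⟨D₁ ∪ D₂,
      fun m => (if m ∈ D₁ then lam₁ m else 0) + (if m ∈ D₂ then lam₂ m else 0),
      ?_, fun a ha => ?_⟩
    · intro m hm x hxm
      rcases Finset.mem_union.mp hm with h | h
      · exact hS₁ m h x hxm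
      · exact hS₂ m h x hxm
    · rw [map_add, hv₁ a ha, hv₂ a ha]
      simp only [add_smul, Finset.sum_add_distrib, ite_smul, zero_smul,
        Finset.sum_ite_mem, Finset.union_inter_cancel_left,
        Finset.union_inter_cancel_right]
  | mul x y hx hy ihx ihy =>
    obtain ⟨D₁, lam₁, hS₁, hv₁⟩ := ihx
    obtain ⟨D₂, lam₂, hS₂, hv₂⟩ := ihy
    choose c hc using fun m n => wordVal_mul hreg (F := F) (R := R) m n (β := β) (ℛ := ℛ)
    refine ⟨(D₁ ×ˢ D₂).image (fun p => p.1 + p.2),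
      fun k => ∑ p ∈ (D₁ ×ˢ D₂).filter (fun p => p.1 + p.2 = k),
        lam₁ p.1 * lam₂ p.2 * (c p.1 p.2 : F),
      ?_, fun a ha => ?_⟩
    · intro m hm x hxm
      obtain ⟨p, hp, rfl⟩ := Finset.mem_image.mp hm
      obtain ⟨hp1, hp2⟩ := Finset.mem_product.mp hp
      rcases Multiset.mem_add.mp hxm with h | h
      · exact hS₁ _ hp1 x h
      · exact hS₂ _ hp2 x h
    · rw [map_mul, hv₁ a ha, hv₂ a ha, Finset.sum_mul_sum]
      have lhs_eq : ∀ m ∈ D₁, ∀ n ∈ D₂,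
          (lam₁ m • wordVal a m) * (lam₂ n • wordVal a n) =
            (lam₁ m * lam₂ n * (c m n : F)) • wordVal a (m + n) := by
        intro m _ n _
        rw [smul_mul_smul_comm, hc m n a ha, smul_smul]
      calc ∑ m ∈ D₁, ∑ n ∈ D₂, (lam₁ m • wordVal a m) * (lam₂ n • wordVal a n)
          = ∑ p ∈ D₁ ×ˢ D₂, (lam₁ p.1 * lam₂ p.2 * (c p.1 p.2 : F)) • wordVal a (p.1 + p.2) := by
            rw [← Finset.sum_product']
            exact Finset.sum_congr rfl fun p hp => by
              obtain ⟨h1, h2⟩ := Finset.mem_product.mp hp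
              exact lhs_eq p.1 h1 p.2 h2
        _ = ∑ k ∈ (D₁ ×ˢ D₂).image (fun p => p.1 + p.2),
              ∑ p ∈ (D₁ ×ˢ D₂).filter (fun p => p.1 + p.2 = k),
                (lam₁ p.1 * lam₂ p.2 * (c p.1 p.2 : F)) • wordVal a (p.1 + p.2) := by
            rw [Finset.sum_fiberwise_of_maps_to (fun p hp => Finset.mem_image_of_mem _ hp)]
        _ = ∑ k ∈ (D₁ ×ˢ D₂).image (fun p => p.1 + p.2),
              (∑ p ∈ (D₁ ×ˢ D₂).filter (fun p => p.1 + p.2 = k),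
                lam₁ p.1 * lam₂ p.2 * (c p.1 p.2 : F)) • wordVal a k := by
            refine Finset.sum_congr rfl fun k _ => ?_
            rw [Finset.sum_smul]
            refine Finset.sum_congr rfl fun p hp => ?_
            rw [(Finset.mem_filter.mp hp).2]

theorem prod_toFinsupp_pow (t : ℕ × H → F) (m : Multiset (ℕ × H)) :
    (Multiset.toFinsupp m).prod (fun n e => t n ^ e) = (Multiset.map t m).prod := by
  classical
  induction m using Multiset.induction_on with
  | empty => simp
  | cons a s ih =>
    have h1 : Multiset.toFinsupp (a ::ₘ s) = Finsupp.single a 1 + Multiset.toFinsupp s := by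
      rw [← Multiset.singleton_add, map_add, Multiset.toFinsupp_singleton]
    rw [h1, Finsupp.prod_add_index (fun x _ => pow_zero (t x))
      (fun x _ b₁ b₂ => pow_add (t x) b₁ b₂),
      Finsupp.prod_single_index (a := a) (b := 1) (h := fun n e => t n ^ e) (pow_zero (t a)),
      ih, Multiset.map_cons, Multiset.prod_cons, pow_one]

/-- Vandermonde-type lemma over an infinite field. -/
theorem vandermonde [Infinite F] (K : Finset (Multiset (ℕ × H))) (s : Multiset (ℕ × H) → R)
    (h : ∀ t : ℕ × H → F, ∑ k ∈ K, (Multiset.map t k).prod • s k = 0) :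
    ∀ k ∈ K, s k = 0 := by
  classical
  intro k hk
  rw [← Module.forall_dual_apply_eq_zero_iff F]
  intro φ
  set P : MvPolynomial (ℕ × H) F :=
    ∑ k ∈ K, MvPolynomial.monomial (Multiset.toFinsupp k) (φ (s k)) with hP
  have heval : ∀ t : ℕ × H → F, MvPolynomial.eval t P = 0 := by
    intro t
    have h2 := congrArg φ (h t)
    simp only [map_sum, map_smul, map_zero, smul_eq_mul] at h2
    rw [hP, map_sum, ← h2]
    refine Finset.sum_congr rfl fun k' _ => ?_
    rw [MvPolynomial.eval_monomial, mul_comm]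
    congr 1
    exact prod_toFinsupp_pow t k'
  have hP0 : P = 0 := MvPolynomial.funext (fun t => by rw [heval t, map_zero])
  have hcoeff : MvPolynomial.coeff (Multiset.toFinsupp k) P = φ (s k) := by
    rw [hP, MvPolynomial.coeff_sum,
      Finset.sum_eq_single_of_mem k hk (fun k' _ hne => ?_)]
    · simp [MvPolynomial.coeff_monomial]
    · rw [MvPolynomial.coeff_monomial, if_neg]
      intro heq
      exact hne ((Multiset.toFinsupp (α := ℕ × H)).injective heq)
  rw [hP0, MvPolynomial.coeff_zero] at hcoeff
  exact hcoeff.symm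

theorem wordVal_scale (t : ℕ × H → F) (b : ℕ × H → R) (m : Multiset (ℕ × H)) :
    wordVal (fun p => t p • b p) m = (Multiset.map t m).prod • wordVal b m := by
  have key : ∀ w : List (ℕ × H),
      (w.map (fun p => t p • b p)).prod = (w.map t).prod • (w.map b).prod := by
    intro w
    induction w with
    | nil => simp
    | cons x l ih =>
      simp only [List.map_cons, List.prod_cons, ih, smul_mul_smul_comm]
  rw [wordVal, wordVal, key]
  congr 1
  conv_rhs => rw [← Multiset.coe_toList m]
  rw [Multiset.map_coe, Multiset.prod_coe]

theorem split_unique {S T : Set (ℕ × H)} (hST : Disjoint S T)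
    {m m' n n' : Multiset (ℕ × H)}
    (hm : ∀ x ∈ m, x ∈ S) (hm' : ∀ x ∈ m', x ∈ S)
    (hn : ∀ x ∈ n, x ∈ T) (hn' : ∀ x ∈ n', x ∈ T)
    (h : m + n = m' + n') : m = m' ∧ n = n' := by
  classical
  have key : ∀ (u v : Multiset (ℕ × H)), (∀ x ∈ u, x ∈ S) → (∀ x ∈ v, x ∈ T) →
      Multiset.filter (· ∈ S) (u + v) = u := by
    intro u v hu hv
    rw [Multiset.filter_add, Multiset.filter_eq_self.mpr hu,
      Multiset.filter_eq_nil.mpr (fun x hx => Set.disjoint_right.mp hST (hv x hx)), add_zero]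
  have h1 : m = m' := by rw [← key m n hm hn, ← key m' n' hm' hn', h]
  exact ⟨h1, add_left_cancel (h1 ▸ h)⟩

end ProofHelpers


/-- Let `F` be an infinite field and `R` an `F`-algebra with a regular
grading by an abelian group `H` satisfying (R1).  If `f` and `g` are polynomials in
disjoint sets of variables, neither of which is an `H`-graded identity for `R`, then
`f * g` is not an `H`-graded identity for `R`. -/
theorem graded_verbally_prime_of_regular
    (F : Type*) [Field F] [Infinite F]
    {H : Type*} [CommGroup H] [DecidableEq H]
    {R : Type*} [Ring R] [Algebra F R]
    (ℛ : H → Submodule F R) (β : H → H → Fˣ)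
    (hreg : IsRegularGrading ℛ β) (hR1 : CondR1 ℛ)
    (S T : Set (ℕ × H)) (hST : Disjoint S T)
    (f g : FreeAlgebra F (ℕ × H))
    (hf : UsesVars S f) (hg : UsesVars T g)
    (hfI : ¬ IsGradedIdentity ℛ f) (hgI : ¬ IsGradedIdentity ℛ g) :
    ¬ IsGradedIdentity ℛ (f * g) := by
  classical
  obtain ⟨Df, lf, hfS, hfv⟩ := normal_form hreg hf
  obtain ⟨Dg, lg, hgT, hgv⟩ := normal_form hreg hg
  -- extract a good component from f
  rw [IsGradedIdentity] at hfI
  push_neg at hfI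
  obtain ⟨a, ha, hane⟩ := hfI
  rw [hfv a ha] at hane
  obtain ⟨m₀, hm₀D, hm₀⟩ := Finset.exists_ne_zero_of_sum_ne_zero hane
  have hlf : lf m₀ ≠ 0 := fun h => hm₀ (by rw [h, zero_smul])
  have hVm₀ : wordVal a m₀ ≠ 0 := fun h => hm₀ (by rw [h, smul_zero])
  have hmonf : ¬ IsGradedIdentity ℛ ((m₀.toList.map (FreeAlgebra.ι F)).prod) := by
    intro hid
    exact hVm₀ (by have := hid a ha; rwa [lift_word] at this)
  -- extract a good component from g
  rw [IsGradedIdentity] at hgI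
  push_neg at hgI
  obtain ⟨a', ha', hane'⟩ := hgI
  rw [hgv a' ha'] at hane'
  obtain ⟨n₀, hn₀D, hn₀⟩ := Finset.exists_ne_zero_of_sum_ne_zero hane'
  have hlg : lg n₀ ≠ 0 := fun h => hn₀ (by rw [h, zero_smul])
  have hVn₀ : wordVal a' n₀ ≠ 0 := fun h => hn₀ (by rw [h, smul_zero])
  have hmong : ¬ IsGradedIdentity ℛ ((n₀.toList.map (FreeAlgebra.ι F)).prod) := by
    intro hid
    exact hVn₀ (by have := hid a' ha'; rwa [lift_word] at this)
  -- apply (R1)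
  have hdisj : m₀.toList.Disjoint n₀.toList := by
    intro x hx1 hx2
    exact Set.disjoint_left.mp hST
      (hfS m₀ hm₀D x (by rwa [← Multiset.mem_toList]))
      (hgT n₀ hn₀D x (by rwa [← Multiset.mem_toList]))
  have hprod := hR1 m₀.toList n₀.toList hdisj hmonf hmong
  rw [IsGradedIdentity] at hprod
  push_neg at hprod
  obtain ⟨b, hb, hbne⟩ := hprod
  rw [map_mul, lift_word, lift_word] at hbne
  have hVV : wordVal b m₀ * wordVal b n₀ ≠ 0 := hbne
  -- suppose f * g is an identity
  intro hFG
  have key : ∀ t : ℕ × H → F,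
      ∑ k ∈ (Df ×ˢ Dg).image (fun p => p.1 + p.2),
        (Multiset.map t k).prod •
          (∑ p ∈ (Df ×ˢ Dg).filter (fun p => p.1 + p.2 = k),
            (lf p.1 * lg p.2) • (wordVal b p.1 * wordVal b p.2)) = 0 := by
    intro t
    have hbt : GradedSubst ℛ (fun p => t p • b p) :=
      fun p => Submodule.smul_mem _ _ (hb p)
    have h0 := hFG _ hbt
    rw [map_mul, hfv _ hbt, hgv _ hbt] at h0
    simp only [wordVal_scale] at h0
    rw [Finset.sum_mul_sum] at h0
    calc ∑ k ∈ (Df ×ˢ Dg).image (fun p => p.1 + p.2),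
          (Multiset.map t k).prod •
            (∑ p ∈ (Df ×ˢ Dg).filter (fun p => p.1 + p.2 = k),
              (lf p.1 * lg p.2) • (wordVal b p.1 * wordVal b p.2))
        = ∑ k ∈ (Df ×ˢ Dg).image (fun p => p.1 + p.2),
            ∑ p ∈ (Df ×ˢ Dg).filter (fun p => p.1 + p.2 = k),
              (lf p.1 • ((Multiset.map t p.1).prod • wordVal b p.1)) *
                (lg p.2 • ((Multiset.map t p.2).prod • wordVal b p.2)) := by
          refine Finset.sum_congr rfl fun k _ => ?_
          rw [Finset.smul_sum]
          refine Finset.sum_congr rfl fun p hp => ?_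
          have hpk : p.1 + p.2 = k := (Finset.mem_filter.mp hp).2
          rw [← hpk, Multiset.map_add, Multiset.prod_add]
          simp only [smul_smul, smul_mul_smul_comm]
          congr 1
          ring
      _ = ∑ p ∈ Df ×ˢ Dg,
            (lf p.1 • ((Multiset.map t p.1).prod • wordVal b p.1)) *
              (lg p.2 • ((Multiset.map t p.2).prod • wordVal b p.2)) := by
          rw [Finset.sum_fiberwise_of_maps_to (fun p hp => Finset.mem_image_of_mem _ hp)]
      _ = ∑ m ∈ Df, ∑ n ∈ Dg,
            (lf m • ((Multiset.map t m).prod • wordVal b m)) *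
              (lg n • ((Multiset.map t n).prod • wordVal b n)) := by
          rw [Finset.sum_product]
      _ = 0 := h0
  have hzero := vandermonde _ _ key (m₀ + n₀)
    (Finset.mem_image.mpr ⟨(m₀, n₀), Finset.mem_product.mpr ⟨hm₀D, hn₀D⟩, rfl⟩)
  have hsingle : ∑ p ∈ (Df ×ˢ Dg).filter (fun p => p.1 + p.2 = m₀ + n₀),
      (lf p.1 * lg p.2) • (wordVal b p.1 * wordVal b p.2)
      = (lf m₀ * lg n₀) • (wordVal b m₀ * wordVal b n₀) := by
    refine Finset.sum_eq_single_of_mem (m₀, n₀)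
      (Finset.mem_filter.mpr ⟨Finset.mem_product.mpr ⟨hm₀D, hn₀D⟩, rfl⟩) ?_
    intro p hp hne
    obtain ⟨hpmem, hpk⟩ := Finset.mem_filter.mp hp
    obtain ⟨hp1, hp2⟩ := Finset.mem_product.mp hpmem
    obtain ⟨h1, h2⟩ := split_unique hST (hfS _ hp1) (hfS _ hm₀D) (hgT _ hp2) (hgT _ hn₀D) hpk
    exact absurd (Prod.ext h1 h2) hne
  rw [hsingle] at hzero
  exact smul_ne_zero (mul_ne_zero hlf hlg) hVV hzero
end

section
/- Let F be an infinite field and let R be an F-algebra with a minimal regular grading by an abelian group H (neutral element ε) that satisfies condition (R1). Let R′ = F⟨X_H⟩/Id_H(R), the quotient of the free H-graded algebra by the ideal of H-graded identities of R, with its canonical H-grading. Then Z(R′) = R′_ε. -/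
section RelativelyFree

variable {F : Type*} [Field F] {H : Type*} [CommGroup H]
variable {R : Type*} [Ring R] [Algebra F R]

/-- The two-sided ideal `Id_H(R)` of `H`-graded identities of `R` in the free
`H`-graded algebra. -/
def gradedIdIdeal (ℛ : H → Submodule F R) : TwoSidedIdeal (FreeAlgebra F (ℕ × H)) :=
  TwoSidedIdeal.mk' {f | IsGradedIdentity ℛ f}
    (fun a _ => by simp)
    (fun {x y} hx hy a ha => by simp [map_add, hx a ha, hy a ha])
    (fun {x} hx a ha => by simp [hx a ha])
    (fun {x y} hy a ha => by simp [map_mul, hy a ha])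
    (fun {x y} hx a ha => by simp [map_mul, hx a ha])

/-- The homogeneous component of degree `h` of the canonical `H`-grading of the free
`H`-graded algebra: the span of the monomials whose degrees multiply to `h`. -/
def FreeComp (F : Type*) [Field F] (H : Type*) [CommGroup H] (h : H) :
    Submodule F (FreeAlgebra F (ℕ × H)) :=
  Submodule.span F
    {m | ∃ w : List (ℕ × H), (w.map Prod.snd).prod = h ∧ m = (w.map (FreeAlgebra.ι F)).prod}

/-- The relatively free algebra `R' = F⟨X_H⟩ / Id_H(R)`. -/
abbrev RelFree (ℛ : H → Submodule F R) : Type _ := (gradedIdIdeal ℛ).ringCon.Quotient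

end RelativelyFree


open FreeAlgebra

section FreeMonomial

variable (F : Type*) [CommSemiring F] {X : Type*}

def freeMonomial (w : List X) : FreeAlgebra F X := (w.map (ι F)).prod

variable {F}

@[simp] lemma freeMonomial_nil : freeMonomial F ([] : List X) = 1 := rfl

@[simp] lemma freeMonomial_cons (p : X) (w : List X) :
    freeMonomial F (p :: w) = ι F p * freeMonomial F w := List.prod_cons

lemma lift_freeMonomial {A : Type*} [Semiring A] [Algebra F A] (a : X → A) (w : List X) :
    lift F a (freeMonomial F w) = (w.map a).prod := by
  simp [freeMonomial, map_list_prod, Function.comp_def]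

lemma lift_smul_freeMonomial {A : Type*} [Semiring A] [Algebra F A] (t : X → F) (a : X → A)
    (w : List X) :
    lift F (fun p => t p • a p) (freeMonomial F w) =
      (w.map t).prod • lift F a (freeMonomial F w) := by
  induction w with
  | nil => simp
  | cons p w ih => simp only [freeMonomial_cons, map_mul, lift_ι_apply, ih, smul_mul_smul_comm,
      List.map_cons, List.prod_cons]

lemma mem_span_freeMonomial_of_mem_adjoin {S : Set X} {f : FreeAlgebra F X}
    (hf : f ∈ Algebra.adjoin F (ι F '' S)) :
    f ∈ Submodule.span F (freeMonomial F '' {w | ∀ p ∈ w, p ∈ S}) := by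
  rw [← Subalgebra.mem_toSubmodule, Algebra.adjoin_eq_span] at hf
  refine Submodule.span_mono ?_ hf
  intro m hm
  obtain ⟨l, hl, rfl⟩ := Submonoid.exists_list_of_mem_closure hm
  clear hm
  induction l with
  | nil => exact ⟨[], by simp, rfl⟩
  | cons x l ih =>
    obtain ⟨p, hp, rfl⟩ := hl x List.mem_cons_self
    obtain ⟨w, hw, hwl⟩ := ih fun y hy => hl y (List.mem_cons_of_mem _ hy)
    refine ⟨p :: w, ?_, by simp [hwl]⟩
    simpa [List.forall_mem_cons] using ⟨hp, hw⟩

lemma exists_finite_mem_adjoin (f : FreeAlgebra F X) :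
    ∃ S : Set X, S.Finite ∧ f ∈ Algebra.adjoin F (ι F '' S) := by
  induction f using FreeAlgebra.induction with
  | grade0 r => exact ⟨∅, Set.finite_empty, Subalgebra.algebraMap_mem _ r⟩
  | grade1 x => exact ⟨{x}, Set.finite_singleton x, Algebra.subset_adjoin ⟨x, rfl, rfl⟩⟩
  | mul a b ha hb =>
    obtain ⟨S, hS, ha⟩ := ha
    obtain ⟨T, hT, hb⟩ := hb
    refine ⟨S ∪ T, hS.union hT, Subalgebra.mul_mem _ ?_ ?_⟩
    · exact Algebra.adjoin_mono (Set.image_mono Set.subset_union_left) ha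
    · exact Algebra.adjoin_mono (Set.image_mono Set.subset_union_right) hb
  | add a b ha hb =>
    obtain ⟨S, hS, ha⟩ := ha
    obtain ⟨T, hT, hb⟩ := hb
    refine ⟨S ∪ T, hS.union hT, Subalgebra.add_mem _ ?_ ?_⟩
    · exact Algebra.adjoin_mono (Set.image_mono Set.subset_union_left) ha
    · exact Algebra.adjoin_mono (Set.image_mono Set.subset_union_right) hb

end FreeMonomial

lemma TwoSidedIdeal.smul_mem_of_mem {K A : Type*} [CommSemiring K] [Ring A] [Algebra K A]
    (I : TwoSidedIdeal A) (c : K) {x : A} (hx : x ∈ I) : c • x ∈ I := by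
  rw [Algebra.smul_def]
  exact I.mul_mem_left _ _ hx

lemma TwoSidedIdeal.smul_mem_iff {K A : Type*} [Field K] [Ring A] [Algebra K A]
    (I : TwoSidedIdeal A) {c : K} (hc : c ≠ 0) {x : A} : c • x ∈ I ↔ x ∈ I :=
  ⟨fun h => by simpa [smul_smul, inv_mul_cancel₀ hc] using I.smul_mem_of_mem c⁻¹ h,
    I.smul_mem_of_mem c⟩

lemma TwoSidedIdeal.ringCon_mk'_eq_iff {A : Type*} [Ring A] (I : TwoSidedIdeal A) {a b : A} :
    I.ringCon.mk' a = I.ringCon.mk' b ↔ a - b ∈ I :=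
  I.ringCon.eq.trans (I.rel_iff a b)

lemma TwoSidedIdeal.ringCon_mk'_mem_center_iff {K X : Type*} [CommRing K]
    (I : TwoSidedIdeal (FreeAlgebra K X)) {f : FreeAlgebra K X} :
    I.ringCon.mk' f ∈ Set.center I.ringCon.Quotient ↔ ∀ x, ι K x * f - f * ι K x ∈ I := by
  simp only [Semigroup.mem_center_iff, (RingCon.mk'_surjective _).forall, ← map_mul,
    I.ringCon_mk'_eq_iff]
  refine ⟨fun h x => h (ι K x), fun h g => ?_⟩
  induction g using FreeAlgebra.induction with
  | grade0 r => simp [Algebra.commutes]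
  | grade1 x => exact h x
  | mul a b ha hb =>
    convert I.add_mem (I.mul_mem_left a _ hb) (I.mul_mem_right _ b ha) using 1
    noncomm_ring
  | add a b ha hb =>
    convert I.add_mem ha hb using 1
    noncomm_ring

lemma MvPolynomial.monomial_toFinsupp_coe {σ R : Type*} [CommSemiring R] [DecidableEq σ]
    (w : List σ) (r : R) : monomial (Multiset.toFinsupp ↑w) r = C r * (w.map X).prod := by
  induction w generalizing r with
  | nil => simp
  | cons p w ih =>
    rw [← Multiset.cons_coe, ← Multiset.singleton_add, Multiset.toFinsupp_add,
      Multiset.toFinsupp_singleton, monomial_single_add, pow_one, ih, List.map_cons,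
      List.prod_cons, mul_left_comm]

section GradedIdentities

variable {F : Type*} [Field F] {G : Type*} {A : Type*} [Ring A] [Algebra F A]
  {𝒜 : G → Submodule F A}

lemma mem_gradedIdIdeal_iff {f : FreeAlgebra F (ℕ × G)} :
    f ∈ gradedIdIdeal 𝒜 ↔ IsGradedIdentity 𝒜 f :=
  TwoSidedIdeal.mem_mk' _ _ _ _ _ _ f

/-- Rescaling each variable `x_p` by `t p` turns a graded identity into a polynomial identity in
the `t p`, whose coefficients are its multihomogeneous components. -/
lemma IsGradedIdentity.sum_filter_coe_eq [Infinite F] [DecidableEq G] {ι : Type*}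
    {s : Finset ι} {c : ι → F} {w : ι → List (ℕ × G)}
    (h : IsGradedIdentity 𝒜 (∑ i ∈ s, c i • freeMonomial F (w i))) (μ : Multiset (ℕ × G)) :
    IsGradedIdentity 𝒜 (∑ i ∈ s with (w i : Multiset (ℕ × G)) = μ, c i • freeMonomial F (w i)) := by
  intro a ha
  have hscaled : ∀ t : ℕ × G → F,
      ∑ i ∈ s, ((w i).map t).prod • c i • lift F a (freeMonomial F (w i)) = 0 := by
    intro t
    have := h (fun p => t p • a p) fun p => (𝒜 p.2).smul_mem _ (ha p)
    simpa only [map_sum, map_smul, lift_smul_freeMonomial, smul_comm (c _)] using this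
  refine (Module.forall_dual_apply_eq_zero_iff F _).mp fun φ => ?_
  let P : MvPolynomial (ℕ × G) F := ∑ i ∈ s,
    MvPolynomial.monomial (Multiset.toFinsupp ↑(w i)) (φ (c i • lift F a (freeMonomial F (w i))))
  have hP : P = 0 := MvPolynomial.funext fun t => by
    rw [map_zero, ← map_zero φ, ← hscaled t, map_sum, map_sum]
    refine Finset.sum_congr rfl fun i _ => ?_
    simp only [MvPolynomial.monomial_toFinsupp_coe, map_mul, MvPolynomial.eval_C, map_list_prod,
      List.map_map, Function.comp_def, MvPolynomial.eval_X, map_smul, smul_eq_mul, mul_comm]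
  have hcoeff := congrArg (MvPolynomial.coeff (Multiset.toFinsupp μ)) hP
  simp only [P, MvPolynomial.coeff_sum, MvPolynomial.coeff_monomial, EmbeddingLike.apply_eq_iff_eq,
    MvPolynomial.coeff_zero] at hcoeff
  rw [map_sum, map_sum]
  simpa only [map_smul, Finset.sum_filter] using hcoeff

end GradedIdentities

section Grading

variable {F : Type*} [Field F] {G : Type*} [Group G] [DecidableEq G] {A : Type*} [Ring A]
  [Algebra F A] {𝒜 : G → Submodule F A}

open DirectSum in
lemma IsAlgGrading.one_mem (h𝒜 : IsAlgGrading 𝒜) : (1 : A) ∈ 𝒜 1 := by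
  let := h𝒜.internal.chooseDecomposition
  -- The degree-`1` component of `1` is a right identity, hence equal to `1`.
  have key : ∀ {g : G} {y : A}, y ∈ 𝒜 g → ∀ z : A,
      (decompose 𝒜 (y * z) g : A) = y * decompose 𝒜 z 1 := by
    intro g y hy z
    induction z using DirectSum.Decomposition.inductionOn 𝒜 with
    | zero => simp
    | @homogeneous i z =>
      by_cases hi : i = 1
      · subst hi
        rw [decompose_of_mem_same 𝒜 z.2, decompose_of_mem_same 𝒜 (by simpa using h𝒜.mul_mem hy z.2)]
      · rw [decompose_of_mem_ne 𝒜 (h𝒜.mul_mem hy z.2) (by simpa using hi),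
          decompose_of_mem_ne 𝒜 z.2 hi, mul_zero]
    | add z z' hz hz' =>
      simp only [mul_add, decompose_add, DirectSum.add_apply, Submodule.coe_add, hz, hz']
  have hunit : ∀ y : A, y * decompose 𝒜 (1 : A) 1 = y := by
    intro y
    induction y using DirectSum.Decomposition.inductionOn 𝒜 with
    | zero => simp
    | homogeneous y => rw [← key y.2 1, mul_one, decompose_of_mem_same 𝒜 y.2]
    | add y y' hy hy' => rw [add_mul, hy, hy']
  have h1 := hunit 1
  rw [one_mul] at h1
  exact h1 ▸ (decompose 𝒜 (1 : A) 1).2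

end Grading

section FreeComp

variable {F : Type*} [Field F] {H : Type*} [CommGroup H]

lemma freeMonomial_mem_freeComp (w : List (ℕ × H)) :
    freeMonomial F w ∈ FreeComp F H (w.map Prod.snd).prod :=
  Submodule.subset_span ⟨w, rfl, rfl⟩

lemma ι_mem_freeComp (p : ℕ × H) : ι F p ∈ FreeComp F H p.2 := by
  simpa using freeMonomial_mem_freeComp (F := F) [p]

lemma FreeComp.mul_mem {g h : H} {x y : FreeAlgebra F (ℕ × H)} (hx : x ∈ FreeComp F H g)
    (hy : y ∈ FreeComp F H h) : x * y ∈ FreeComp F H (g * h) := by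
  have hle : FreeComp F H g * FreeComp F H h ≤ FreeComp F H (g * h) := by
    rw [FreeComp, FreeComp, Submodule.span_mul_span]
    refine Submodule.span_le.mpr ?_
    rintro _ ⟨_, ⟨w₁, rfl, rfl⟩, _, ⟨w₂, rfl, rfl⟩, rfl⟩
    exact Submodule.subset_span ⟨w₁ ++ w₂, by simp, by simp⟩
  exact hle (Submodule.mul_mem_mul hx hy)

lemma iSup_freeComp : ⨆ h, FreeComp F H h = ⊤ := by
  refine eq_top_iff.mpr fun f _ => ?_
  have hf : f ∈ Algebra.adjoin F (ι F '' Set.univ) := by simp [adjoin_range_ι]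
  refine Submodule.span_le.mpr ?_ (mem_span_freeMonomial_of_mem_adjoin hf)
  rintro _ ⟨w, -, rfl⟩
  exact Submodule.mem_iSup_of_mem _ (freeMonomial_mem_freeComp w)

variable [DecidableEq H] {R : Type*} [Ring R] [Algebra F R] {ℛ : H → Submodule F R}

namespace IsAlgGrading

variable (hℛ : IsAlgGrading ℛ) {a : ℕ × H → R} (ha : GradedSubst ℛ a)
include hℛ ha

lemma lift_freeMonomial_mem (w : List (ℕ × H)) :
    lift F a (freeMonomial F w) ∈ ℛ (w.map Prod.snd).prod := by
  induction w with
  | nil => simpa using hℛ.one_mem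
  | cons p w ih => simpa using hℛ.mul_mem (ha p) ih

lemma lift_mem_of_mem_freeComp {h : H} {f : FreeAlgebra F (ℕ × H)} (hf : f ∈ FreeComp F H h) :
    lift F a f ∈ ℛ h := by
  induction hf using Submodule.span_induction with
  | mem m hm =>
    obtain ⟨w, rfl, rfl⟩ := hm
    exact hℛ.lift_freeMonomial_mem ha w
  | zero => simp
  | add x y _ _ hx hy => simpa using add_mem hx hy
  | smul c x _ hx => simpa using Submodule.smul_mem _ c hx

end IsAlgGrading

lemma IsAlgGrading.mem_gradedIdIdeal_of_sum_mem (hℛ : IsAlgGrading ℛ) {ι : Type*} {deg : ι → H}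
    (hdeg : Function.Injective deg) {s : Finset ι} {x : ι → FreeAlgebra F (ℕ × H)}
    (hx : ∀ i ∈ s, x i ∈ FreeComp F H (deg i)) (hsum : ∑ i ∈ s, x i ∈ gradedIdIdeal ℛ) :
    ∀ i ∈ s, x i ∈ gradedIdIdeal ℛ := by
  classical
  intro i hi
  rw [mem_gradedIdIdeal_iff] at hsum ⊢
  intro a ha
  have hindep := (iSupIndep_iff_finsetSum_eq_zero_imp_eq_zero _).mp
    (hℛ.internal.submodule_iSupIndep.comp hdeg)
  exact hindep s (fun i => lift F a (x i)) (fun i hi => hℛ.lift_mem_of_mem_freeComp ha (hx i hi))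
    (by simpa only [map_sum] using hsum a ha) i hi

end FreeComp

namespace IsRegularGrading

variable {F : Type*} [Field F] {H : Type*} [CommGroup H] [DecidableEq H] {R : Type*} [Ring R]
  [Algebra F R] {ℛ : H → Submodule F R} {β : H → H → Fˣ} (hℛ : IsRegularGrading ℛ β)
include hℛ

lemma isAlgGrading : IsAlgGrading ℛ := ⟨hℛ.internal, hℛ.mul_mem⟩

lemma beta_mul_left (g₁ g₂ h : H) : β (g₁ * g₂) h = β g₁ h * β g₂ h := by
  obtain ⟨r, hr, hne⟩ := hℛ.prod_ne_zero 3 ![g₁, g₂, h]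
  have hx : r 0 ∈ ℛ g₁ := hr 0
  have hy : r 1 ∈ ℛ g₂ := hr 1
  have hz : r 2 ∈ ℛ h := hr 2
  have hxyz : r 0 * r 1 * r 2 ≠ 0 := by simpa [List.ofFn_succ, mul_assoc] using hne
  have hzxy : r 2 * (r 0 * r 1) ≠ 0 := fun h0 =>
    hxyz (by rw [hℛ.comm (hℛ.mul_mem hx hy) hz, h0, smul_zero])
  refine Units.ext (smul_left_injective F hzxy ?_)
  calc ((β (g₁ * g₂) h : Fˣ) : F) • (r 2 * (r 0 * r 1)) = r 0 * r 1 * r 2 :=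
        (hℛ.comm (hℛ.mul_mem hx hy) hz).symm
    _ = ((β g₂ h : Fˣ) : F) • (r 0 * r 2 * r 1) := by
        rw [mul_assoc, hℛ.comm hy hz, mul_smul_comm, mul_assoc]
    _ = ((β g₁ h * β g₂ h : Fˣ) : F) • (r 2 * (r 0 * r 1)) := by
        rw [hℛ.comm hx hz, smul_mul_assoc, smul_smul, Units.val_mul, mul_comm, mul_assoc]

lemma beta_one_left (h : H) : β 1 h = 1 := by
  simpa using hℛ.beta_mul_left 1 1 h

lemma mul_sub_smul_mul_mem_gradedIdIdeal {g h : H} {f f' : FreeAlgebra F (ℕ × H)}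
    (hf : f ∈ FreeComp F H g) (hf' : f' ∈ FreeComp F H h) :
    f * f' - ((β g h : Fˣ) : F) • (f' * f) ∈ gradedIdIdeal ℛ := by
  rw [mem_gradedIdIdeal_iff]
  intro a ha
  rw [map_sub, map_mul, map_smul, map_mul, sub_eq_zero]
  exact hℛ.comm (hℛ.isAlgGrading.lift_mem_of_mem_freeComp ha hf)
    (hℛ.isAlgGrading.lift_mem_of_mem_freeComp ha hf')

lemma exists_freeMonomial_sub_smul_mem {w₁ w₂ : List (ℕ × H)} (hw : w₁.Perm w₂) :
    ∃ u : F, freeMonomial F w₁ - u • freeMonomial F w₂ ∈ gradedIdIdeal ℛ := by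
  induction hw with
  | nil => exact ⟨1, by simp⟩
  | cons p _ ih =>
    obtain ⟨u, hu⟩ := ih
    exact ⟨u, by simpa [mul_sub, mul_smul_comm] using (gradedIdIdeal ℛ).mul_mem_left (ι F p) _ hu⟩
  | swap p p' w =>
    refine ⟨β p'.2 p.2, ?_⟩
    simpa [sub_mul, smul_mul_assoc, mul_assoc] using (gradedIdIdeal ℛ).mul_mem_right _
      (freeMonomial F w)
      (hℛ.mul_sub_smul_mul_mem_gradedIdIdeal (ι_mem_freeComp p') (ι_mem_freeComp p))
  | trans _ _ ih₁ ih₂ =>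
    obtain ⟨u₁, hu₁⟩ := ih₁
    obtain ⟨u₂, hu₂⟩ := ih₂
    refine ⟨u₁ * u₂, ?_⟩
    convert add_mem hu₁ ((gradedIdIdeal ℛ).smul_mem_of_mem u₁ hu₂) using 1
    rw [smul_sub, smul_smul]
    abel

lemma not_isGradedIdentity_ι (q : ℕ × H) : ¬ IsGradedIdentity ℛ (freeMonomial F [q]) := by
  obtain ⟨r, hr, hne⟩ := hℛ.prod_ne_zero 1 fun _ => q.2
  intro hq
  apply hne
  simpa [lift_freeMonomial] using hq (Function.update 0 q (r 0)) fun p => by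
    by_cases hp : p = q
    · subst hp; simpa using hr 0
    · simp [hp]

end IsRegularGrading

section RelativelyFree

variable {F : Type*} [Field F] {H : Type*} [CommGroup H] [DecidableEq H] {R : Type*} [Ring R]
  [Algebra F R] {ℛ : H → Submodule F R} {β : H → H → Fˣ}

lemma CondR1.freeMonomial_mem_of_cons_mem (hR1 : CondR1 ℛ) (hℛ : IsRegularGrading ℛ β)
    {q : ℕ × H} {w : List (ℕ × H)} (hq : q ∉ w)
    (h : freeMonomial F (q :: w) ∈ gradedIdIdeal ℛ) : freeMonomial F w ∈ gradedIdIdeal ℛ := by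
  rw [mem_gradedIdIdeal_iff] at h ⊢
  by_contra hw
  refine hR1 [q] w (List.singleton_disjoint.mpr hq) (hℛ.not_isGradedIdentity_ι q) hw ?_
  simpa [freeMonomial] using h

lemma IsRegularGrading.exists_sum_sub_smul_mem (hℛ : IsRegularGrading ℛ β) {ι : Type*}
    {s : Finset ι} (c : ι → F) {w : ι → List (ℕ × H)} {v : List (ℕ × H)}
    (hw : ∀ i ∈ s, (w i).Perm v) :
    ∃ κ : F, ∑ i ∈ s, c i • freeMonomial F (w i) - κ • freeMonomial F v ∈ gradedIdIdeal ℛ := by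
  choose! u hu using fun i hi => hℛ.exists_freeMonomial_sub_smul_mem (hw i hi)
  refine ⟨∑ i ∈ s, c i * u i, ?_⟩
  rw [Finset.sum_smul, ← Finset.sum_sub_distrib]
  refine sum_mem fun i hi => ?_
  convert (gradedIdIdeal ℛ).smul_mem_of_mem (c i) (hu i hi) using 1
  rw [smul_sub, smul_smul]

lemma IsRegularGrading.mem_gradedIdIdeal_of_ι_mul_mem [Infinite F] (hℛ : IsRegularGrading ℛ β)
    (hR1 : CondR1 ℛ) {S : Set (ℕ × H)} {f : FreeAlgebra F (ℕ × H)} (hf : UsesVars S f)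
    {q : ℕ × H} (hq : q ∉ S)
    (hqf : ι F q * f ∈ gradedIdIdeal ℛ) : f ∈ gradedIdIdeal ℛ := by
  obtain ⟨l, hl, rfl⟩ :=
    (Finsupp.mem_span_image_iff_linearCombination F).mp (mem_span_freeMonomial_of_mem_adjoin hf)
  rw [Finsupp.linearCombination_apply, Finsupp.sum] at hqf ⊢
  rw [Finset.mul_sum] at hqf
  simp_rw [mul_smul_comm, ← freeMonomial_cons] at hqf
  rw [← Finset.sum_fiberwise_of_maps_to (g := ((↑) : List (ℕ × H) → Multiset (ℕ × H)))
    fun w hw => Finset.mem_image_of_mem _ hw]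
  refine sum_mem fun μ hμ => ?_
  obtain ⟨v, hv, rfl⟩ := Finset.mem_image.mp hμ
  obtain ⟨κ, hκ⟩ := hℛ.exists_sum_sub_smul_mem l (w := fun w => w) (v := v)
    (s := {w ∈ l.support | ((w : List (ℕ × H)) : Multiset (ℕ × H)) = v})
    fun w hw => Multiset.coe_eq_coe.mp (Finset.mem_filter.mp hw).2
  have hfiber : ∑ w ∈ l.support with ((w : List (ℕ × H)) : Multiset (ℕ × H)) = v,
      l w • freeMonomial F (q :: w) ∈ gradedIdIdeal ℛ := by
    have := (mem_gradedIdIdeal_iff.mp hqf).sum_filter_coe_eq (w := fun w => q :: w) (q ::ₘ ↑v)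
    rw [mem_gradedIdIdeal_iff]
    simpa only [← Multiset.cons_coe, Multiset.cons_inj_right] using this
  have hκq : κ • freeMonomial F (q :: v) ∈ gradedIdIdeal ℛ := by
    convert sub_mem hfiber ((gradedIdIdeal ℛ).mul_mem_left (ι F q) _ hκ) using 1
    simp [mul_sub, Finset.mul_sum]
  rcases eq_or_ne κ 0 with hκ0 | hκ0
  · simpa [hκ0] using hκ
  · have hqv : q ∉ v := fun hqv => hq (hl hv q hqv)
    have hvI :=
      hR1.freeMonomial_mem_of_cons_mem hℛ hqv (((gradedIdIdeal ℛ).smul_mem_iff hκ0).mp hκq)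
    simpa using add_mem hκ ((gradedIdIdeal ℛ).smul_mem_of_mem κ hvI)

lemma IsRegularGrading.mem_gradedIdIdeal_of_commute [Infinite F] (hℛ : IsRegularGrading ℛ β)
    (hmin : ∀ h : H, h ≠ 1 → ∃ h' : H, β h h' ≠ 1) (hR1 : CondR1 ℛ) {h : H} (hh : h ≠ 1)
    {f : FreeAlgebra F (ℕ × H)} (hf : f ∈ FreeComp F H h)
    (hcomm : ∀ p, ι F p * f - f * ι F p ∈ gradedIdIdeal ℛ) : f ∈ gradedIdIdeal ℛ := by
  obtain ⟨h', hβ⟩ := hmin h hh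
  obtain ⟨S, hS, hfS⟩ := exists_finite_mem_adjoin f
  obtain ⟨N, hN⟩ := (hS.image Prod.fst).infinite_compl.nonempty
  have hq : (N, h') ∉ S := fun hmem => hN ⟨_, hmem, rfl⟩
  refine hℛ.mem_gradedIdIdeal_of_ι_mul_mem hR1 hfS hq ?_
  have hne : (1 : F) - β h h' ≠ 0 := sub_ne_zero.mpr fun e => hβ (Units.ext e.symm)
  refine ((gradedIdIdeal ℛ).smul_mem_iff hne).mp ?_
  convert add_mem (hcomm (N, h'))
    (hℛ.mul_sub_smul_mul_mem_gradedIdIdeal hf (ι_mem_freeComp (N, h'))) using 1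
  rw [sub_smul, one_smul]
  abel

lemma IsRegularGrading.exists_mem_freeComp_one_sub_mem [Infinite F] (hℛ : IsRegularGrading ℛ β)
    (hmin : ∀ h : H, h ≠ 1 → ∃ h' : H, β h h' ≠ 1) (hR1 : CondR1 ℛ)
    {f : FreeAlgebra F (ℕ × H)} (hcomm : ∀ p, ι F p * f - f * ι F p ∈ gradedIdIdeal ℛ) :
    ∃ f₁ ∈ FreeComp F H 1, f - f₁ ∈ gradedIdIdeal ℛ := by
  obtain ⟨d, hd, rfl⟩ := (Submodule.mem_iSup_iff_exists_finsupp _ f).mp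
    (iSup_freeComp (F := F) (H := H) ▸ Submodule.mem_top)
  have hcomp : ∀ h ∈ d.support, ∀ p, ι F p * d h - d h * ι F p ∈ gradedIdIdeal ℛ := by
    intro h hh p
    refine hℛ.isAlgGrading.mem_gradedIdIdeal_of_sum_mem (mul_right_injective p.2)
      (x := fun h => ι F p * d h - d h * ι F p) (fun h _ => sub_mem ?_ ?_) ?_ h hh
    · exact FreeComp.mul_mem (ι_mem_freeComp p) (hd h)
    · exact mul_comm h p.2 ▸ FreeComp.mul_mem (hd h) (ι_mem_freeComp p)
    · simpa [Finsupp.sum, Finset.mul_sum, Finset.sum_mul] using hcomm p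
  refine ⟨d 1, hd 1, ?_⟩
  rw [← Finsupp.add_sum_erase' d 1 (fun _ x => x) fun _ => rfl, add_sub_cancel_left]
  refine sum_mem fun h hh => ?_
  rw [Finsupp.support_erase, Finset.mem_erase] at hh
  rw [Finsupp.erase_ne hh.1]
  exact hℛ.mem_gradedIdIdeal_of_commute hmin hR1 hh.1 (hd h) (hcomp h hh.2)

lemma IsRegularGrading.ι_mul_sub_mul_ι_mem_of_mem_freeComp_one (hℛ : IsRegularGrading ℛ β)
    {f : FreeAlgebra F (ℕ × H)} (hf : f ∈ FreeComp F H 1) (p : ℕ × H) :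
    ι F p * f - f * ι F p ∈ gradedIdIdeal ℛ := by
  simpa [hℛ.beta_one_left] using
    neg_mem (hℛ.mul_sub_smul_mul_mem_gradedIdIdeal hf (ι_mem_freeComp p))

end RelativelyFree

/-- Let `F` be an infinite field and `R` an `F`-algebra with a minimal
regular grading by an abelian group `H` satisfying (R1).  If `R' = F⟨X_H⟩/Id_H(R)` with
its canonical `H`-grading, then `Z(R')` is the image of the neutral homogeneous
component of `F⟨X_H⟩`. -/
theorem center_of_relatively_free
    (F : Type*) [Field F] [Infinite F]
    {H : Type*} [CommGroup H] [DecidableEq H]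
    {R : Type*} [Ring R] [Algebra F R]
    (ℛ : H → Submodule F R) (β : H → H → Fˣ)
    (hreg : IsRegularGrading ℛ β)
    (hmin : ∀ h : H, h ≠ 1 → ∃ h' : H, β h h' ≠ 1)
    (hR1 : CondR1 ℛ) :
    Set.center (RelFree ℛ) =
      (fun x => (gradedIdIdeal ℛ).ringCon.mk' x) ''
        (FreeComp F H 1 : Set (FreeAlgebra F (ℕ × H))) := by
  ext z
  constructor
  · intro hz
    obtain ⟨f, rfl⟩ := RingCon.mk'_surjective _ z
    obtain ⟨f₁, hf₁, hff₁⟩ := hreg.exists_mem_freeComp_one_sub_mem hmin hR1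
      ((TwoSidedIdeal.ringCon_mk'_mem_center_iff _).mp hz)
    exact ⟨f₁, hf₁, (TwoSidedIdeal.ringCon_mk'_eq_iff _).mpr (by simpa using neg_mem hff₁)⟩
  · rintro ⟨f, hf, rfl⟩
    exact (TwoSidedIdeal.ringCon_mk'_mem_center_iff _).mpr
      (hreg.ι_mul_sub_mul_ι_mem_of_mem_freeComp_one hf)
end

section
/- Let F be an infinite field and let R be an F-algebra with a regular grading by an abelian group H that satisfies condition (R1). Then R is verbally prime: for any two polynomials f(x_1,…,x_t) and g(x_{t+1},…,x_s) in disjoint sets of variables in the free associative algebra F⟨X⟩, if neither f nor g is an ordinary polynomial identity for R, then f·g is not an ordinary polynomial identity for R. -/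
section Ordinary

variable (F : Type*) [Field F] (A : Type*) [Ring A] [Algebra F A]

/-- `f` is an ordinary polynomial identity for `A`. -/
def IsIdentity (f : FreeAlgebra F ℕ) : Prop := ∀ a : ℕ → A, FreeAlgebra.lift F a f = 0

/-- `f` is an ordinary central polynomial for `A`. -/
def IsCentral (f : FreeAlgebra F ℕ) : Prop :=
  ¬ IsIdentity F A f ∧ ∀ a : ℕ → A, FreeAlgebra.lift F a f ∈ Set.center A

/-- The primeness property for ordinary central polynomials: if a product of two
polynomials in disjoint sets of variables is central, then both factors are central. -/
def HasPrimeness : Prop :=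
  ∀ (S T : Set ℕ) (f g : FreeAlgebra F ℕ),
    Disjoint S T → f ∈ Algebra.adjoin F (FreeAlgebra.ι F '' S) →
    g ∈ Algebra.adjoin F (FreeAlgebra.ι F '' T) →
    IsCentral F A (f * g) → IsCentral F A f ∧ IsCentral F A g

end Ordinary

/-!
Substitute for each variable `x_i` of an ordinary polynomial the sum `∑_h t_{i,h} x_{i,h}` of its
homogeneous components, where the `t_{i,h}` are commuting indeterminates (the exponent monoid
`Multiset (ℕ × H)` of `R[Multiset (ℕ × H)]`). By (P2), on graded substitutions the coefficient of
each monomial in the `t`'s is a fixed scalar times the corresponding graded word. A non-identity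
`f` therefore has a word `w₁` in its variables with nonzero scalar that is not a graded identity,
and likewise `w₂` for `g`; by (R1) some graded `ρ` has `w₁(ρ) w₂(ρ) ≠ 0`. Since the variables of
`f` and `g` are disjoint, this is the coefficient of `t^{w₁ w₂}` in `(f g)(ρ)`, up to a nonzero
scalar; but as `f g` is an identity, every specialization of the `t`'s kills it, so over an
infinite field it vanishes as a polynomial in the `t`'s.
-/

open AddMonoidAlgebra DirectSum

section EvalScalars

variable {F ι R : Type*} [CommSemiring F] [Semiring R] [Algebra F R]

noncomputable def evalScalars (t : ι → F) : AddMonoidAlgebra R (Multiset ι) →ₐ[F] R :=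
  liftNCAlgHom (AlgHom.id F R)
    { toFun := fun m => algebraMap F R (m.toAdd.map t).prod
      map_one' := by simp
      map_mul' := fun _ _ => by simp }
    fun _ _ => Algebra.commute_algebraMap_right _ _

@[simp]
theorem evalScalars_single (t : ι → F) (m : Multiset ι) (c : R) :
    evalScalars t (single m c) = (m.map t).prod • c := by
  rw [evalScalars, coe_liftNCAlgHom, liftNC_single, Algebra.smul_def, Algebra.commutes]
  rfl

theorem evalScalars_apply (t : ι → F) (x : AddMonoidAlgebra R (Multiset ι)) :
    evalScalars t x = x.coeff.sum fun m c => (m.map t).prod • c := by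
  conv_lhs => rw [← x.sum_coeff_single]
  simp only [map_finsuppSum, evalScalars_single]

end EvalScalars

theorem eq_zero_of_forall_evalScalars_eq_zero {F ι R : Type*} [Field F] [Infinite F] [Ring R]
    [Algebra F R] {x : AddMonoidAlgebra R (Multiset ι)} (hx : ∀ t : ι → F, evalScalars t x = 0) :
    x = 0 := by
  classical
  ext d
  refine (Module.forall_dual_apply_eq_zero_iff F _).mp fun φ => ?_
  -- Through `φ` the coefficients of `x` become those of a scalar polynomial vanishing on `ι → F`.
  let p : MvPolynomial ι F :=
    x.coeff.sum fun m c => MvPolynomial.monomial (Multiset.toFinsupp m) (φ c)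
  have hp : p = 0 := MvPolynomial.funext fun t => by
    simpa [p, map_finsuppSum, evalScalars_apply, MvPolynomial.eval_monomial, Finsupp.prod,
      Finset.prod_multiset_map_count, mul_comm] using congr(φ $(hx t))
  have := congr(MvPolynomial.coeff (Multiset.toFinsupp d) $hp)
  by_cases hd : x.coeff d = 0
  · simp [hd]
  · simpa [p, Finsupp.sum, MvPolynomial.coeff_sum, MvPolynomial.coeff_monomial, hd] using this

theorem Multiset.eq_and_eq_of_add_eq_add {α : Type*} {p : α → Prop} {a b c d : Multiset α}
    (ha : ∀ x ∈ a, p x) (hb : ∀ x ∈ b, ¬ p x) (hc : ∀ x ∈ c, p x) (hd : ∀ x ∈ d, ¬ p x)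
    (h : a + b = c + d) : a = c ∧ b = d := by
  classical
  have filter_add_eq {a b : Multiset α} (ha : ∀ x ∈ a, p x) (hb : ∀ x ∈ b, ¬ p x) :
      (a + b).filter p = a := by
    rw [Multiset.filter_add, Multiset.filter_eq_self.mpr ha, Multiset.filter_eq_nil.mpr hb,
      add_zero]
  have hac : a = c := by rw [← filter_add_eq ha hb, h, filter_add_eq hc hd]
  exact ⟨hac, add_left_cancel (hac ▸ h)⟩

section GradedExpansion

variable {F H R : Type*} [CommSemiring F] [Semiring R] [Algebra F R]

noncomputable def gradedExpansion (H₀ : ℕ → Finset H) (r : ℕ × H → R) (i : ℕ) :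
    AddMonoidAlgebra R (Multiset (ℕ × H)) :=
  ∑ h ∈ H₀ i, single {(i, h)} (r (i, h))

theorem evalScalars_lift_gradedExpansion (t : ℕ × H → F) (H₀ : ℕ → Finset H) (r : ℕ × H → R)
    (f : FreeAlgebra F ℕ) :
    evalScalars t (FreeAlgebra.lift F (gradedExpansion H₀ r) f)
      = FreeAlgebra.lift F (fun i => ∑ h ∈ H₀ i, t (i, h) • r (i, h)) f := by
  rw [← AlgHom.comp_apply]
  congr 1
  ext i
  simp [gradedExpansion]

theorem exists_coeff_lift_gradedExpansion_ne_zero {a : ℕ → R} {f : FreeAlgebra F ℕ}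
    (ha : FreeAlgebra.lift F a f ≠ 0) {H₀ : ℕ → Finset H} {r : ℕ × H → R}
    (hr : ∀ i, ∑ h ∈ H₀ i, r (i, h) = a i) :
    ∃ d, (FreeAlgebra.lift F (gradedExpansion H₀ r) f).coeff d ≠ 0 := by
  by_contra! h
  have hzero : FreeAlgebra.lift F (gradedExpansion H₀ r) f = 0 :=
    AddMonoidAlgebra.ext (Finsupp.ext h)
  exact ha (by simpa [hzero, hr] using (evalScalars_lift_gradedExpansion 1 H₀ r f).symm)

theorem vars_mem_of_mem_support_lift_gradedExpansion {S : Set ℕ} {f : FreeAlgebra F ℕ}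
    (hf : f ∈ Algebra.adjoin F (FreeAlgebra.ι F '' S)) (H₀ : ℕ → Finset H) (r : ℕ × H → R) :
    ∀ m ∈ (FreeAlgebra.lift F (gradedExpansion H₀ r) f).coeff.support, ∀ v ∈ m, v.1 ∈ S := by
  classical
  induction hf using Algebra.adjoin_induction with
  | mem x hx =>
    obtain ⟨i, hi, rfl⟩ := hx
    intro m hm v hv
    rw [FreeAlgebra.lift_ι_apply, gradedExpansion, coeff_sum] at hm
    obtain ⟨h, -, hm⟩ := Finsupp.mem_support_finsetSum m hm
    obtain rfl := Finset.mem_singleton.mp (Finsupp.support_single_subset hm)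
    obtain rfl := Multiset.mem_singleton.mp hv
    exact hi
  | algebraMap c =>
    intro m hm v hv
    rw [AlgHom.commutes, coe_algebraMap] at hm
    obtain rfl := Finset.mem_singleton.mp (Finsupp.support_single_subset hm)
    exact absurd hv (Multiset.notMem_zero v)
  | add x y _ _ ihx ihy =>
    intro m hm v hv
    rw [map_add] at hm
    rcases Finset.mem_union.mp (Finsupp.support_add hm) with h | h
    exacts [ihx m h v hv, ihy m h v hv]
  | mul x y _ _ ihx ihy =>
    intro m hm v hv
    rw [map_mul] at hm
    obtain ⟨m₁, hm₁, m₂, hm₂, rfl⟩ := Finset.mem_add.mp (support_coeff_mul_subset _ _ hm)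
    rcases Multiset.mem_add.mp hv with h | h
    exacts [ihx m₁ hm₁ v h, ihy m₂ hm₂ v h]

theorem coeff_mul_add_of_disjoint {S T : Set ℕ} (hST : Disjoint S T)
    {x y : AddMonoidAlgebra R (Multiset (ℕ × H))}
    (hx : ∀ m ∈ x.coeff.support, ∀ v ∈ m, v.1 ∈ S) (hy : ∀ m ∈ y.coeff.support, ∀ v ∈ m, v.1 ∈ T)
    {d₁ d₂ : Multiset (ℕ × H)} (hd₁ : ∀ v ∈ d₁, v.1 ∈ S) (hd₂ : ∀ v ∈ d₂, v.1 ∈ T) :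
    (x * y).coeff (d₁ + d₂) = x.coeff d₁ * y.coeff d₂ := by
  have notMem {d : Multiset (ℕ × H)} (hd : ∀ v ∈ d, v.1 ∈ T) : ∀ v ∈ d, v.1 ∉ S :=
    fun v hv => hST.notMem_of_mem_right (hd v hv)
  exact coeff_mul_add_of_uniqueAdd fun _ _ hm₁ hm₂ h =>
    Multiset.eq_and_eq_of_add_eq_add (hx _ hm₁) (notMem (hy _ hm₂)) hd₁ (notMem hd₂) h

end GradedExpansion

section WordCoeffs

variable {F : Type*} [Field F] {H : Type*} {R : Type*} [Ring R] [Algebra F R]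
  {ℛ : H → Submodule F R}

def HasWordCoeffs (ℛ : H → Submodule F R)
    (X : (ℕ × H → R) → AddMonoidAlgebra R (Multiset (ℕ × H))) (C : Multiset (ℕ × H) → F) :
    Prop :=
  ∀ d r, GradedSubst ℛ r → (X r).coeff d = C d • (d.toList.map r).prod

theorem hasWordCoeffs_algebraMap (c : F) :
    HasWordCoeffs ℛ (fun _ => algebraMap F _ c) (Finsupp.single 0 c) := by
  classical
  intro d r _
  rw [coe_algebraMap, Function.comp_apply, coeff_single, Finsupp.single_apply,
    Finsupp.single_apply]
  split_ifs with hd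
  · subst hd; simp [Algebra.algebraMap_eq_smul_one]
  · rw [zero_smul]

theorem hasWordCoeffs_gradedExpansion (H₀ : ℕ → Finset H) (i : ℕ) :
    HasWordCoeffs ℛ (fun r => gradedExpansion H₀ r i)
      (∑ h ∈ H₀ i, Finsupp.single {(i, h)} 1) := by
  classical
  intro d r _
  simp only [gradedExpansion, coeff_sum, coeff_single, Finsupp.coe_finsetSum, Finset.sum_apply,
    Finset.sum_smul]
  refine Finset.sum_congr rfl fun h _ => ?_
  rw [Finsupp.single_apply, Finsupp.single_apply]
  split_ifs with hd
  · subst hd; simp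
  · rw [zero_smul]

theorem HasWordCoeffs.add {X Y : (ℕ × H → R) → AddMonoidAlgebra R (Multiset (ℕ × H))}
    {C D : Multiset (ℕ × H) → F} (hX : HasWordCoeffs ℛ X C) (hY : HasWordCoeffs ℛ Y D) :
    HasWordCoeffs ℛ (fun r => X r + Y r) (C + D) := fun d r hr => by
  rw [coeff_add, Finsupp.add_apply, hX d r hr, hY d r hr, Pi.add_apply, add_smul]

end WordCoeffs

section Regular

variable {F : Type*} [Field F] {H : Type*} [CommGroup H] [DecidableEq H]
  {R : Type*} [Ring R] [Algebra F R] {ℛ : H → Submodule F R} {β : H → H → Fˣ}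

theorem IsRegularGrading.exists_list_prod_eq_smul_of_perm (hreg : IsRegularGrading ℛ β)
    {l₁ l₂ : List (ℕ × H)} (p : l₁.Perm l₂) :
    ∃ c : F, ∀ r : ℕ × H → R, GradedSubst ℛ r → (l₁.map r).prod = c • (l₂.map r).prod := by
  induction p with
  | nil => exact ⟨1, fun r _ => by simp⟩
  | cons x _ ih =>
    obtain ⟨c, hc⟩ := ih
    exact ⟨c, fun r hr => by simp only [List.map_cons, List.prod_cons, hc r hr, mul_smul_comm]⟩
  | swap x y l =>
    refine ⟨β y.2 x.2, fun r hr => ?_⟩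
    simp only [List.map_cons, List.prod_cons, ← mul_assoc]
    rw [hreg.comm (hr y) (hr x), smul_mul_assoc]
  | trans _ _ ih₁ ih₂ =>
    obtain ⟨c₁, hc₁⟩ := ih₁
    obtain ⟨c₂, hc₂⟩ := ih₂
    exact ⟨c₂ * c₁, fun r hr => by rw [hc₁ r hr, hc₂ r hr, smul_smul, mul_comm c₁]⟩

theorem HasWordCoeffs.mul (hreg : IsRegularGrading ℛ β)
    {X Y : (ℕ × H → R) → AddMonoidAlgebra R (Multiset (ℕ × H))}
    {C D : Multiset (ℕ × H) → F} (hX : HasWordCoeffs ℛ X C) (hY : HasWordCoeffs ℛ Y D) :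
    ∃ E, HasWordCoeffs ℛ (fun r => X r * Y r) E := by
  have hperm (d₁ d₂ : Multiset (ℕ × H)) := hreg.exists_list_prod_eq_smul_of_perm
    (show (d₁.toList ++ d₂.toList).Perm (d₁ + d₂).toList by
      rw [← Multiset.coe_eq_coe, ← Multiset.coe_add, Multiset.coe_toList, Multiset.coe_toList,
        Multiset.coe_toList])
  choose c hc using hperm
  refine ⟨fun d => ∑ p ∈ d.antidiagonal.toFinset, C p.1 * D p.2 * c p.1 p.2, fun d r hr => ?_⟩
  rw [coeff_mul_antidiag _ _ d d.antidiagonal.toFinset (by simp), Finset.sum_smul]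
  refine Finset.sum_congr rfl fun p hp => ?_
  obtain rfl : p.1 + p.2 = d := by simpa using hp
  rw [hX _ r hr, hY _ r hr, smul_mul_smul_comm, ← List.prod_append, ← List.map_append, hc _ _ r hr,
    smul_smul]

theorem exists_hasWordCoeffs_lift_gradedExpansion (hreg : IsRegularGrading ℛ β)
    (H₀ : ℕ → Finset H) (f : FreeAlgebra F ℕ) :
    ∃ C, HasWordCoeffs ℛ (fun r => FreeAlgebra.lift F (gradedExpansion H₀ r) f) C := by
  induction f using FreeAlgebra.induction with
  | grade0 c => exact ⟨_, by simpa only [AlgHom.commutes] using hasWordCoeffs_algebraMap c⟩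
  | grade1 i =>
    exact ⟨_, by simpa only [FreeAlgebra.lift_ι_apply] using hasWordCoeffs_gradedExpansion H₀ i⟩
  | mul x y ihx ihy =>
    obtain ⟨C, hC⟩ := ihx
    obtain ⟨D, hD⟩ := ihy
    simpa only [map_mul] using hC.mul hreg hD
  | add x y ihx ihy =>
    obtain ⟨C, hC⟩ := ihx
    obtain ⟨D, hD⟩ := ihy
    exact ⟨_, by simpa only [map_add] using hC.add hD⟩

end Regular

section Decomposition

variable {F : Type*} [Field F] {H : Type*} [DecidableEq H] {R : Type*} [Ring R] [Algebra F R]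
  {ℛ : H → Submodule F R} [Decomposition ℛ] [∀ (h : H) (x : ℛ h), Decidable (x ≠ 0)]

theorem exists_word_not_isGradedIdentity {S : Set ℕ} {f : FreeAlgebra F ℕ}
    (hf : f ∈ Algebra.adjoin F (FreeAlgebra.ι F '' S)) {a : ℕ → R}
    (ha : FreeAlgebra.lift F a f ≠ 0) {H₀ : ℕ → Finset H}
    (hH₀ : ∀ i, (decompose ℛ (a i)).support ⊆ H₀ i) {C : Multiset (ℕ × H) → F}
    (hC : HasWordCoeffs ℛ (fun r => FreeAlgebra.lift F (gradedExpansion H₀ r) f) C) :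
    ∃ d : Multiset (ℕ × H), (∀ v ∈ d, v.1 ∈ S) ∧ C d ≠ 0 ∧
      ¬ IsGradedIdentity ℛ (d.toList.map (FreeAlgebra.ι F)).prod := by
  let r : ℕ × H → R := fun v => decompose ℛ (a v.1) v.2
  have hr : GradedSubst ℛ r := fun v => (decompose ℛ (a v.1) v.2).2
  have hsum (i : ℕ) : ∑ h ∈ H₀ i, r (i, h) = a i :=
    (Finset.sum_subset (hH₀ i) fun h _ hh => by
      simp [r, DFinsupp.notMem_support_iff.mp hh]).symm.trans (sum_support_decompose ℛ (a i))
  obtain ⟨d, hd⟩ := exists_coeff_lift_gradedExpansion_ne_zero ha hsum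
  rw [hC d r hr] at hd
  refine ⟨d, vars_mem_of_mem_support_lift_gradedExpansion hf H₀ r d ?_, left_ne_zero_of_smul hd,
    fun hid => right_ne_zero_of_smul hd ?_⟩
  · rw [Finsupp.mem_support_iff, hC d r hr]; exact hd
  · simpa [map_list_prod] using hid r hr

end Decomposition

/-- Let `F` be an infinite field and `R` an `F`-algebra with a regular
grading by an abelian group `H` satisfying (R1).  Then `R` is verbally prime: if `f` and
`g` are ordinary polynomials in disjoint sets of variables, neither of which is an
identity for `R`, then `f * g` is not an identity for `R`. -/
theorem verbally_prime_of_regular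
    (F : Type*) [Field F] [Infinite F]
    {H : Type*} [CommGroup H] [DecidableEq H]
    {R : Type*} [Ring R] [Algebra F R]
    (ℛ : H → Submodule F R) (β : H → H → Fˣ)
    (hreg : IsRegularGrading ℛ β) (hR1 : CondR1 ℛ)
    (S T : Set ℕ) (hST : Disjoint S T)
    (f g : FreeAlgebra F ℕ)
    (hf : f ∈ Algebra.adjoin F (FreeAlgebra.ι F '' S))
    (hg : g ∈ Algebra.adjoin F (FreeAlgebra.ι F '' T))
    (hfI : ¬ IsIdentity F R f) (hgI : ¬ IsIdentity F R g) :
    ¬ IsIdentity F R (f * g) := by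
  classical
  let _ := hreg.internal.chooseDecomposition
  intro hfgI
  obtain ⟨a, ha⟩ := not_forall.mp hfI
  obtain ⟨b, hb⟩ := not_forall.mp hgI
  let H₀ (i : ℕ) := (decompose ℛ (a i)).support ∪ (decompose ℛ (b i)).support
  obtain ⟨Cf, hCf⟩ := exists_hasWordCoeffs_lift_gradedExpansion hreg H₀ f
  obtain ⟨Cg, hCg⟩ := exists_hasWordCoeffs_lift_gradedExpansion hreg H₀ g
  obtain ⟨d₁, hd₁, hCd₁, hw₁⟩ :=
    exists_word_not_isGradedIdentity hf ha (fun _ => Finset.subset_union_left) hCf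
  obtain ⟨d₂, hd₂, hCd₂, hw₂⟩ :=
    exists_word_not_isGradedIdentity hg hb (fun _ => Finset.subset_union_right) hCg
  have hdisj : d₁.toList.Disjoint d₂.toList := fun v h₁ h₂ =>
    hST.notMem_of_mem_left (hd₁ v (Multiset.mem_toList.mp h₁)) (hd₂ v (Multiset.mem_toList.mp h₂))
  obtain ⟨ρ, hρ, hρne⟩ : ∃ ρ, GradedSubst ℛ ρ ∧
      (d₁.toList.map ρ).prod * (d₂.toList.map ρ).prod ≠ 0 := by
    simpa [IsGradedIdentity, map_list_prod] using hR1 _ _ hdisj hw₁ hw₂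
  have hQ : FreeAlgebra.lift F (gradedExpansion H₀ ρ) (f * g) = 0 :=
    eq_zero_of_forall_evalScalars_eq_zero fun t =>
      (evalScalars_lift_gradedExpansion t H₀ ρ _).trans (hfgI _)
  have hcoeff := congr(($hQ).coeff (d₁ + d₂))
  rw [map_mul, coeff_mul_add_of_disjoint hST (vars_mem_of_mem_support_lift_gradedExpansion hf H₀ ρ)
    (vars_mem_of_mem_support_lift_gradedExpansion hg H₀ ρ) hd₁ hd₂, hCf _ _ hρ, hCg _ _ hρ,
    smul_mul_smul_comm, coeff_zero, Finsupp.zero_apply] at hcoeff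
  exact hρne ((smul_eq_zero.mp hcoeff).resolve_left (mul_ne_zero hCd₁ hCd₂))
end
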